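/- arXiv:2102.08287 — 7 statements merged into one kernel-verified Lean document; each statement's English description precedes it below -/
import Mathlib

section
/- Let q be a power of an odd prime, t ≥ 2 an integer, n = 2t, and let h ∈ 𝔽_{q^n} satisfy h^{q^t+1} = −1. Then h^{q^2+1} ≠ 1 and h^{q^{t−2}} ≠ −h. -/
/-- If `q` is a power of an odd prime, `t ≥ 2`, `n = 2t` and `h ∈ 𝔽_{q^n}` satisfies
`h^{q^t+1} = -1`, then `h^{q^2+1} ≠ 1` and `h^{q^{t-2}} ≠ -h`. -/
theorem stmt1 (p r q t : ℕ) (hp : p.Prime) (hpodd : Odd p) (hr : 0 < r)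
    (hq : q = p ^ r) (ht : 2 ≤ t)
    (F : Type*) [Field F] [Fintype F] (hcard : Fintype.card F = q ^ (2 * t))
    (h : F) (hh : h ^ (q ^ t + 1) = -1) :
    h ^ (q ^ 2 + 1) ≠ 1 ∧ h ^ q ^ (t - 2) ≠ -h := by
  have hqodd : Odd q := hq ▸ hpodd.pow
  have hq1 : 1 < q := by
    have h2 := hp.two_le
    have : 2 ≤ p ^ r := le_trans h2 (Nat.le_self_pow hr.ne' p)
    omega
  -- -1 ≠ 1 in F
  have hne : (-1 : F) ≠ 1 := by
    apply Ring.neg_one_ne_one_of_char_ne_two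
    intro hc
    have hmod := FiniteField.even_card_of_char_two hc
    rw [hcard] at hmod
    have hodd : Odd (q ^ (2 * t)) := hqodd.pow
    rw [Nat.odd_iff] at hodd
    omega
  have h0 : h ≠ 0 := by
    intro h0
    rw [h0, zero_pow (by positivity)] at hh
    exact hne (by linear_combination (-2 : F) * hh)
  have hh' : h ^ q ^ t * h = -1 := by rw [← pow_succ]; exact hh
  obtain ⟨s, hs⟩ := id hqodd
  -- main part 1
  have part1 : h ^ (q ^ 2 + 1) ≠ 1 := by
    intro H2
    have H2' : h ^ q ^ 2 = h⁻¹ := by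
      have e : h ^ q ^ 2 * h = 1 := by rw [← pow_succ]; exact H2
      field_simp
      linear_combination e
    have key : ∀ m, h ^ q ^ (m + 2) = (h ^ q ^ m)⁻¹ := by
      intro m
      have e : q ^ (m + 2) = q ^ 2 * q ^ m := by ring
      rw [e, pow_mul, H2', inv_pow]
    have key4 : ∀ m, h ^ q ^ (m + 4) = h ^ q ^ m := by
      intro m
      have e : m + 4 = m + 2 + 2 := by ring
      rw [e, key (m + 2), key m, inv_inv]
    have keyper : ∀ a b, h ^ q ^ (4 * a + b) = h ^ q ^ b := by
      intro a
      induction a with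
      | zero => simp
      | succ n ih =>
        intro b
        have e : 4 * (n + 1) + b = 4 * n + b + 4 := by ring
        rw [e, key4, ih]
    have hQt : h ^ q ^ t = h ^ q ^ (t % 4) := by
      conv_lhs => rw [show t = 4 * (t / 4) + t % 4 by omega]
      exact keyper _ _
    -- helper: h^q = -h leads to contradiction
    have final : h ^ q = -h → False := by
      intro hqh
      have e2 : h ^ q ^ 2 = h := by
        rw [show q ^ 2 = q * q by ring, pow_mul, hqh, hqodd.neg_pow, hqh, neg_neg]
      have hinv : h⁻¹ = h := by rw [← H2']; exact e2
      have hsq : h * h = 1 := by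
        field_simp at hinv
        linear_combination -hinv
      have hqh2 : h ^ q = h := by
        rw [hs, pow_succ, pow_mul, show h ^ 2 = 1 by rw [sq]; exact hsq]
        simp
      rw [hqh2] at hqh
      have : (2 : F) * h = 0 := by linear_combination hqh
      rcases mul_eq_zero.mp this with h2 | hz
      · exact hne (by linear_combination -h2)
      · exact h0 hz
    have hb : t % 4 = 0 ∨ t % 4 = 1 ∨ t % 4 = 2 ∨ t % 4 = 3 := by omega
    rcases hb with hb | hb | hb | hb
    · -- h * h = -1, then h^(q^2+1) = -1 ≠ 1
      rw [hb, pow_zero, pow_one] at hQt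
      rw [hQt] at hh'
      have e : q ^ 2 + 1 = 2 * (2 * (s ^ 2 + s) + 1) := by subst hs; ring
      rw [e, pow_mul, sq, hh', Odd.neg_one_pow ⟨2 * (s ^ 2 + s) / 2, by omega⟩] at H2
      exact hne H2
    · -- h^q * h = -1
      rw [hb, pow_one] at hQt
      rw [hQt] at hh'
      apply final
      have e : h ^ q ^ 2 * h ^ q = -1 := by
        rw [show q ^ 2 = q * q by ring, pow_mul, ← mul_pow, hh', hqodd.neg_one_pow]
      rw [H2'] at e
      field_simp at e
      linear_combination e
    · rw [hb] at hQt
      rw [hQt, H2', inv_mul_cancel₀ h0] at hh'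
      exact hne hh'.symm
    · rw [hb, show (3 : ℕ) = 1 + 2 by rfl, key 1, pow_one] at hQt
      rw [hQt] at hh'
      apply final
      have hqn0 : h ^ q ≠ 0 := pow_ne_zero _ h0
      field_simp at hh'
      linear_combination hh'
  refine ⟨part1, ?_⟩
  intro hcon
  apply part1
  have e : (h ^ q ^ (t - 2)) ^ q ^ 2 = (-h) ^ q ^ 2 := by rw [hcon]
  rw [← pow_mul, ← pow_add, show t - 2 + 2 = t by omega,
    Odd.neg_pow (hqodd.pow) h] at e
  rw [e] at hh'
  rw [pow_succ]
  linear_combination -hh'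
end

section
/- The field 𝔽_{q^n}, viewed as a vector space over 𝔽_{q^t}, is the direct sum of ker L and ker M, and also the direct sum of the image of L and the image of M; in particular ker L ∩ ker M = {0}, every element of 𝔽_{q^n} is the sum of an element of ker L and an element of ker M, im L ∩ im M = {0}, and every element of 𝔽_{q^n} is the sum of an element of im L and an element of im M. -/
/-- The map `L(x) = x^q - h^{1-q^{t+1}} x^{q^{t+1}}`, with `h^{1-q^j} = h / h^{q^j}`. -/
def Lmap {F : Type*} [Field F] (q t : ℕ) (h : F) (x : F) : F :=
  x ^ q - h / h ^ q ^ (t + 1) * x ^ q ^ (t + 1)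

/-- The map `M(x) = x^{q^{t-1}} + h^{1-q^{2t-1}} x^{q^{2t-1}}`, with `h^{1-q^j} = h / h^{q^j}`. -/
def Mmap {F : Type*} [Field F] (q t : ℕ) (h : F) (x : F) : F :=
  x ^ q ^ (t - 1) + h / h ^ q ^ (2 * t - 1) * x ^ q ^ (2 * t - 1)

/-!
Write `σ x = x ^ q ^ t`, `φ x = x ^ q` and `ψ x = x ^ q ^ (t - 1)`: these are ring endomorphisms
with `σ ∘ σ = id` and `φ ∘ ψ = ψ ∘ φ = σ`, and `σ h * h = -1`. Then `L x = φ (x + c * σ x)` and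
`M x = ψ (x + d * σ x)` with `σ c * c = σ d * d = 1`, so `ker L`, `ker M`, `im L`, `im M` are
the solution sets of `σ x = a * x` for suitable `a` with `σ a * a = 1`. Two such sets with
distinct `a` are complementary, the projections being given by explicit formulas.
The eigenvalues are distinct because `h ^ q + h ^ q ^ (t - 1) = 0` would force
`h ^ (q ^ 2 + 1) = 1`, which contradicts `h ^ (q ^ t + 1) = -1` since `(q ^ 2 + 1) / 2` is odd.
-/

section Eigenspaces

variable {F : Type*} [Field F] {σ : F →+* F} {a b : F}

theorem exists_add_of_map_mul_eq_one (hσ : ∀ x, σ (σ x) = x) (hab : a ≠ b)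
    (ha : σ a * a = 1) (hb : σ b * b = 1) (x : F) :
    ∃ u v, σ u = a * u ∧ σ v = b * v ∧ x = u + v := by
  have ha₀ : a ≠ 0 := right_ne_zero_of_mul_eq_one ha
  have hb₀ : b ≠ 0 := right_ne_zero_of_mul_eq_one hb
  have hba : b - a ≠ 0 := sub_ne_zero.mpr hab.symm
  have hσa : σ a = a⁻¹ := eq_inv_of_mul_eq_one_left ha
  have hσb : σ b = b⁻¹ := eq_inv_of_mul_eq_one_left hb
  refine ⟨(b * x - σ x) / (b - a), (σ x - a * x) / (b - a), ?_, ?_, ?_⟩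
  · simp only [map_div₀, map_sub, map_mul, hσ, hσa, hσb]
    field_simp
    ring
  · simp only [map_div₀, map_sub, map_mul, hσ, hσa, hσb]
    field_simp
    ring
  · field_simp
    ring

theorem eq_zero_and_exists_add_of_iff {P Q : F → Prop} (hσ : ∀ x, σ (σ x) = x) (hab : a ≠ b)
    (ha : σ a * a = 1) (hb : σ b * b = 1) (hP : ∀ x, P x ↔ σ x = a * x)
    (hQ : ∀ x, Q x ↔ σ x = b * x) :
    (∀ x, P x → Q x → x = 0) ∧ ∀ x, ∃ u v, P u ∧ Q v ∧ x = u + v := by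
  refine ⟨fun x hPx hQx ↦ ?_, fun x ↦ ?_⟩
  · have : (a - b) * x = 0 := by rw [sub_mul, ← (hP x).mp hPx, ← (hQ x).mp hQx, sub_self]
    exact (mul_eq_zero.mp this).resolve_left (sub_ne_zero.mpr hab)
  · obtain ⟨u, v, hu, hv, rfl⟩ := exists_add_of_map_mul_eq_one hσ hab ha hb x
    exact ⟨u, v, (hP u).mpr hu, (hQ v).mpr hv, rfl⟩

end Eigenspaces

section Twisted

variable {F : Type*} [Field F] {σ : F →+* F} {c : F}

theorem map_add_mul_eq_zero_iff (φ : F →+* F) (hc : σ c * c = 1) (x : F) :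
    φ (x + c * σ x) = 0 ↔ σ x = -σ c * x := by
  rw [map_eq_zero]
  constructor
  · intro hx
    linear_combination σ c * hx - σ x * hc
  · intro hx
    linear_combination c * hx - x * hc

theorem exists_map_add_mul_eq_iff (hσ : ∀ x, σ (σ x) = x) (hc : σ c * c = 1) (h2 : (2 : F) ≠ 0)
    {φ : F →+* F} (hφσ : ∀ x, φ (σ x) = σ (φ x)) (hφ : Function.Surjective φ) (z : F) :
    (∃ x, φ (x + c * σ x) = z) ↔ σ z = φ (σ c) * z := by
  constructor
  · rintro ⟨x, rfl⟩
    rw [← hφσ, ← map_mul]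
    congr 1
    simp only [map_add, map_mul, hσ]
    linear_combination -σ x * hc
  · intro hz
    obtain ⟨w, rfl⟩ := hφ z
    have hw : σ w = σ c * w := by
      apply φ.injective
      rw [hφσ, hz, map_mul]
    refine ⟨w / 2, ?_⟩
    congr 1
    rw [map_div₀, hw, map_ofNat]
    field_simp
    linear_combination w * hc

theorem ker_complement (hσ : ∀ x, σ (σ x) = x) {c d : F} (hc : σ c * c = 1) (hd : σ d * d = 1)
    (hcd : c ≠ d) {φ ψ : F →+* F} {L M : F → F} (hL : ∀ x, L x = φ (x + c * σ x))
    (hM : ∀ x, M x = ψ (x + d * σ x)) :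
    (∀ x, L x = 0 → M x = 0 → x = 0) ∧ ∀ x, ∃ u v, L u = 0 ∧ M v = 0 ∧ x = u + v := by
  refine eq_zero_and_exists_add_of_iff hσ (fun h ↦ hcd (σ.injective (neg_inj.mp h))) ?_ ?_
    (fun x ↦ by rw [hL, map_add_mul_eq_zero_iff φ hc]) (fun x ↦ by rw [hM, map_add_mul_eq_zero_iff ψ hd])
  · rw [map_neg, hσ, neg_mul_neg, mul_comm, hc]
  · rw [map_neg, hσ, neg_mul_neg, mul_comm, hd]

theorem range_complement (hσ : ∀ x, σ (σ x) = x) (h2 : (2 : F) ≠ 0) {c d : F}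
    (hc : σ c * c = 1) (hd : σ d * d = 1) {φ ψ : F →+* F} (hφσ : ∀ x, φ (σ x) = σ (φ x))
    (hψσ : ∀ x, ψ (σ x) = σ (ψ x)) (hφ : Function.Surjective φ) (hψ : Function.Surjective ψ)
    (hcd : φ (σ c) ≠ ψ (σ d)) {L M : F → F} (hL : ∀ x, L x = φ (x + c * σ x))
    (hM : ∀ x, M x = ψ (x + d * σ x)) :
    (∀ z, (∃ x, L x = z) → (∃ y, M y = z) → z = 0) ∧
      ∀ z, ∃ z₁ z₂, (∃ x, L x = z₁) ∧ (∃ y, M y = z₂) ∧ z = z₁ + z₂ := by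
  refine eq_zero_and_exists_add_of_iff hσ hcd ?_ ?_
    (by simpa only [hL] using exists_map_add_mul_eq_iff hσ hc h2 hφσ hφ)
    (by simpa only [hM] using exists_map_add_mul_eq_iff hσ hd h2 hψσ hψ)
  · rw [← hφσ, hσ, ← map_mul, mul_comm, hc, map_one]
  · rw [← hψσ, hσ, ← map_mul, mul_comm, hd, map_one]

end Twisted

section Pair

variable {F : Type*} [Field F] {σ φ ψ : F →+* F} {h : F}

theorem map_comm_of_comp_eq (hφψ : ∀ x, φ (ψ x) = σ x) (hψφ : ∀ x, ψ (φ x) = σ x) (x : F) :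
    ψ (σ x) = σ (ψ x) := by
  rw [← hφψ, hψφ]

theorem map_add_map_ne_zero (hσ : ∀ x, σ (σ x) = x) (hφψ : ∀ x, φ (ψ x) = σ x)
    (hψφ : ∀ x, ψ (φ x) = σ x) (hh : σ h * h = -1) (hφφ : φ (φ h) * h ≠ 1) : φ h + ψ h ≠ 0 := by
  intro hsum
  have h₀ : h ≠ 0 := by rintro rfl; simp at hh
  have hσh : σ h = -h⁻¹ := by
    field_simp
    linear_combination hh
  have hinv : h = (φ (φ h))⁻¹ :=
    calc h = φ (σ (ψ h)) := by rw [← map_comm_of_comp_eq hφψ hψφ, hφψ, hσ]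
      _ = (φ (φ h))⁻¹ := by
        rw [eq_neg_of_add_eq_zero_right hsum, map_neg, map_neg,
          ← map_comm_of_comp_eq hψφ hφψ, hσh, map_neg, map_inv₀, map_neg, map_inv₀, neg_neg]
  exact hφφ ((mul_eq_one_iff_inv_eq₀ (by simpa using h₀)).mpr hinv.symm)

theorem map_div_mul_map_eq_one (hσ : ∀ x, σ (σ x) = x) (hφψ : ∀ x, φ (ψ x) = σ x)
    (hψφ : ∀ x, ψ (φ x) = σ x) (hh : σ h * h = -1) :
    σ (ψ (σ h) / σ h) * (ψ (σ h) / σ h) = 1 := by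
  rw [map_div₀, ← map_comm_of_comp_eq hφψ hψφ, hσ, div_mul_div_comm, ← map_mul, mul_comm h, hh,
    map_neg, map_one, div_self (neg_ne_zero.mpr one_ne_zero)]

theorem surjective_of_comp_eq (hσ : ∀ x, σ (σ x) = x) (hφψ : ∀ x, φ (ψ x) = σ x) :
    Function.Surjective φ :=
  fun x ↦ ⟨ψ (σ x), by rw [hφψ, hσ]⟩

theorem ker_and_range_complement_of_comp_eq (hσ : ∀ x, σ (σ x) = x) (hφψ : ∀ x, φ (ψ x) = σ x)
    (hψφ : ∀ x, ψ (φ x) = σ x) (h2 : (2 : F) ≠ 0) (hh : σ h * h = -1)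
    (hφφ : φ (φ h) * h ≠ 1) {L M : F → F} (hL : ∀ x, L x = φ x - h / φ (σ h) * φ (σ x))
    (hM : ∀ x, M x = ψ x + h / ψ (σ h) * ψ (σ x)) :
    ((∀ x, L x = 0 → M x = 0 → x = 0) ∧ ∀ x, ∃ u v, L u = 0 ∧ M v = 0 ∧ x = u + v) ∧
    ((∀ z, (∃ x, L x = z) → (∃ y, M y = z) → z = 0) ∧
      ∀ z, ∃ z₁ z₂, (∃ x, L x = z₁) ∧ (∃ y, M y = z₂) ∧ z = z₁ + z₂) := by
  have h₀ : h ≠ 0 := by rintro rfl; simp at hh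
  have hσh₀ : σ h ≠ 0 := (map_ne_zero σ).mpr h₀
  have hsum := map_add_map_ne_zero hσ hφψ hψφ hh hφφ
  set cL := -(ψ (σ h) / σ h) with hcL
  set cM := φ (σ h) / σ h with hcM
  have hL' (x : F) : L x = φ (x + cL * σ x) := by
    rw [hL, map_add, map_mul, map_neg, map_div₀, hφψ, hσ]; ring
  have hM' (x : F) : M x = ψ (x + cM * σ x) := by
    rw [hM, map_add, map_mul, map_div₀, hψφ, hσ]
  have hnL : σ cL * cL = 1 := by
    rw [map_neg, neg_mul_neg]; exact map_div_mul_map_eq_one hσ hφψ hψφ hh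
  have hnM : σ cM * cM = 1 := map_div_mul_map_eq_one hσ hψφ hφψ hh
  have hφσ : ∀ x, φ (σ x) = σ (φ x) := map_comm_of_comp_eq hψφ hφψ
  have hψσ : ∀ x, ψ (σ x) = σ (ψ x) := map_comm_of_comp_eq hφψ hψφ
  have hker : cL ≠ cM := by
    intro hc
    rw [hcL, hcM] at hc
    field_simp at hc
    refine hsum ((map_eq_zero σ).mp ?_)
    rw [map_add, ← hφσ, ← hψσ]
    linear_combination -hc
  have hrange : φ (σ cL) ≠ ψ (σ cM) := by
    intro heq
    simp only [hcL, hcM, map_neg, map_div₀, ← hφσ, ← hψσ, hσ, hφψ, hψφ] at heq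
    have hφ₀ : φ h ≠ 0 := (map_ne_zero φ).mpr h₀
    have hψ₀ : ψ h ≠ 0 := (map_ne_zero ψ).mpr h₀
    field_simp at heq
    exact hsum (by linear_combination -heq)
  exact ⟨ker_complement hσ hnL hnM hker hL' hM',
    range_complement hσ h2 hnL hnM hφσ hψσ (surjective_of_comp_eq hσ hφψ)
      (surjective_of_comp_eq hσ hψφ) hrange hL' hM'⟩

end Pair

theorem charP_of_card_eq_pow {F : Type*} [Field F] [Fintype F] {p k : ℕ} (hp : p.Prime)
    (hcard : Fintype.card F = p ^ k) : CharP F p := by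
  obtain ⟨p', _, n, hp', hcard'⟩ := FiniteField.card' F
  have hdvd : p' ∣ p := hp'.dvd_of_dvd_pow (n := k) (hcard ▸ hcard' ▸ dvd_pow_self p' n.ne_zero)
  rwa [← (Nat.prime_dvd_prime_iff_eq hp' hp).mp hdvd]

theorem pow_sq_add_one_ne_one {R : Type*} [CommRing R] (h2 : (2 : R) ≠ 0) {q t : ℕ} (hq : Odd q)
    {x : R} (hx : x ^ (q ^ t + 1) = -1) : x ^ (q ^ 2 + 1) ≠ 1 := by
  intro h1
  obtain ⟨k, hk⟩ := (hq.pow : Odd (q ^ t)).add_one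
  obtain ⟨j, rfl⟩ := hq
  have : (-1 : R) = 1 :=
    calc (-1 : R) = (-1) ^ (2 * (j * j + j) + 1) := (odd_two_mul_add_one _).neg_one_pow.symm
      _ = (x ^ ((2 * j + 1) ^ 2 + 1)) ^ k := by
        rw [← hx, ← pow_mul, ← pow_mul, hk]; ring_nf
      _ = 1 := by rw [h1, one_pow]
  exact h2 (by linear_combination -this)

theorem stmt2_general (p r q t : ℕ) (hp : p.Prime) (hpodd : Odd p)
    (hq : q = p ^ r) (ht : 3 ≤ t)
    (F : Type*) [Field F] [Fintype F] (hcard : Fintype.card F = q ^ (2 * t))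
    (h : F) (hh : h ^ (q ^ t + 1) = -1) :
    (∀ x : F, Lmap q t h x = 0 → Mmap q t h x = 0 → x = 0) ∧
    (∀ x : F, ∃ u v : F, Lmap q t h u = 0 ∧ Mmap q t h v = 0 ∧ x = u + v) ∧
    (∀ z : F, (∃ x : F, Lmap q t h x = z) → (∃ y : F, Mmap q t h y = z) → z = 0) ∧
    (∀ z : F, ∃ z₁ z₂ : F, (∃ x : F, Lmap q t h x = z₁) ∧ (∃ y : F, Mmap q t h y = z₂) ∧
      z = z₁ + z₂) := by
  have := Fact.mk hp
  have : CharP F p := charP_of_card_eq_pow hp (by rw [hcard, hq, ← pow_mul])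
  have h2 : (2 : F) ≠ 0 :=
    Ring.two_ne_zero (by rw [ringChar.eq F p]; rintro rfl; exact (by decide : ¬Odd 2) hpodd)
  set frob : ℕ → F →+* F := fun k ↦ iterateFrobenius F p (r * k)
  have hfrob (k : ℕ) (x : F) : frob k x = x ^ q ^ k := by
    rw [hq, ← pow_mul]; rfl
  have hpred : t - 1 + 1 = t := by omega
  have hσ (x : F) : frob t (frob t x) = x := by
    rw [hfrob, hfrob, ← pow_mul, ← pow_add, ← two_mul, ← hcard, FiniteField.pow_card]
  have hφψ (x : F) : frob 1 (frob (t - 1) x) = frob t x := by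
    rw [hfrob, hfrob, hfrob, ← pow_mul, ← pow_add, hpred]
  have hψφ (x : F) : frob (t - 1) (frob 1 x) = frob t x := by
    rw [hfrob, hfrob, hfrob, ← pow_mul, ← pow_add, add_comm, hpred]
  have hφφ : frob 1 (frob 1 h) * h ≠ 1 := by
    rw [hfrob, hfrob, pow_one, ← pow_mul, ← sq, ← pow_succ]
    exact pow_sq_add_one_ne_one h2 (hq ▸ hpodd.pow) hh
  have hL (x : F) : Lmap q t h x = frob 1 x - h / frob 1 (frob t h) * frob 1 (frob t x) := by
    simp only [Lmap, hfrob, pow_one, ← pow_mul, ← pow_succ]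
  have hM (x : F) :
      Mmap q t h x = frob (t - 1) x + h / frob (t - 1) (frob t h) * frob (t - 1) (frob t x) := by
    simp only [Mmap, hfrob, ← pow_mul, ← pow_add, show t + (t - 1) = 2 * t - 1 by omega]
  have hh' : frob t h * h = -1 := by rw [hfrob, ← pow_succ, hh]
  obtain ⟨hker, him⟩ := ker_and_range_complement_of_comp_eq hσ hφψ hψφ h2 hh' hφφ hL hM
  exact ⟨hker.1, hker.2, him.1, him.2⟩

/-- `𝔽_{q^n} = ker L ⊕ ker M = im L ⊕ im M` (as `𝔽_{q^t}`-vector spaces): the kernels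
intersect trivially and sum to everything, and likewise for the images. -/
theorem stmt2 (p r q t : ℕ) (hp : p.Prime) (hpodd : Odd p) (hr : 0 < r)
    (hq : q = p ^ r) (ht : 3 ≤ t)
    (F : Type*) [Field F] [Fintype F] (hcard : Fintype.card F = q ^ (2 * t))
    (h : F) (hh : h ^ (q ^ t + 1) = -1) :
    (∀ x : F, Lmap q t h x = 0 → Mmap q t h x = 0 → x = 0) ∧
    (∀ x : F, ∃ u v : F, Lmap q t h u = 0 ∧ Mmap q t h v = 0 ∧ x = u + v) ∧
    (∀ z : F, (∃ x : F, Lmap q t h x = z) → (∃ y : F, Mmap q t h y = z) → z = 0) ∧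
    (∀ z : F, ∃ z₁ z₂ : F, (∃ x : F, Lmap q t h x = z₁) ∧ (∃ y : F, Mmap q t h y = z₂) ∧
      z = z₁ + z₂) :=
  stmt2_general p r q t hp hpodd hq ht F hcard h hh
end

section
/- For all x ∈ 𝔽_{q^n}, L(x)^{q^t} = −h^{q^t−q}·L(x) and M(x)^{q^t} = h^{q^t−q^{t−1}}·M(x). Consequently the image of L equals {z ∈ 𝔽_{q^n} : z^{q^t} + h^{q^t−q}·z = 0} and the image of M equals {z ∈ 𝔽_{q^n} : z^{q^t} − h^{q^t−q^{t−1}}·z = 0}, and each of these two sets is a 1-dimensional 𝔽_{q^t}-subspace of 𝔽_{q^n}. -/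
/-!
Write `σ x = x ^ q ^ t`; it is an involutive ring endomorphism of `F` because `|F| = (q ^ t) ^ 2`.
Both `L` and `M` have the shape `T x = φ x + ε * (h / σ (φ h)) * σ (φ x)`, with `φ x = x ^ q`,
`ε = -1` for `L` and `φ x = x ^ q ^ (t - 1)`, `ε = 1` for `M`. Applying `σ` and using
`h * σ h = -1` gives `σ (T x) = ε * (σ h / φ h) * T x`, so the image of `T` lies in the root set
of `z ^ q ^ t = a * z`, which has at most `q ^ t` elements. If `T x = 0` then `u = σ (φ x)`
satisfies `σ u = b * u` for a fixed `b`, so the kernel, injected into another such root set by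
`σ ∘ φ`, has at most `q ^ t` elements; hence the image has at least `q ^ t` elements and is the
whole root set. Such a root set is the `𝔽_{q^t}`-line through any of its nonzero elements.
-/

theorem AddMonoidHom.le_ncard_range {G H : Type*} [AddGroup G] [Finite G] [AddGroup H]
    (f : G →+ H) {k N : ℕ} (hG : Nat.card G = k * N) (hker : Nat.card f.ker ≤ k) :
    N ≤ (Set.range f).ncard := by
  have hmul : Nat.card f.ker * (Set.range f).ncard = k * N := by
    rw [← hG, ← AddSubgroup.card_mul_index f.ker, AddSubgroup.index_ker, ← AddMonoidHom.coe_range,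
      ← Nat.card_coe_set_eq]
    rfl
  have hk : 0 < k := Nat.card_pos.trans_le hker
  refine Nat.le_of_mul_le_mul_left ?_ hk
  calc k * N = Nat.card f.ker * (Set.range f).ncard := hmul.symm
    _ ≤ k * (Set.range f).ncard := Nat.mul_le_mul_right _ hker

section

variable {F : Type*} [Field F]

theorem ncard_setOf_pow_eq_mul_le {N : ℕ} (hN : 2 ≤ N) (a : F) :
    {z : F | z ^ N = a * z}.ncard ≤ N := by
  open Polynomial in
  set P : F[X] := X ^ N - C a * X
  have hdeg : P.natDegree = N := by
    rw [natDegree_sub_eq_left_of_natDegree_lt] <;> rw [natDegree_X_pow]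
    exact (natDegree_C_mul_le a X).trans_lt (by rw [natDegree_X]; omega)
  have hP : P ≠ 0 := fun h0 => by rw [h0, natDegree_zero] at hdeg; omega
  calc {z : F | z ^ N = a * z}.ncard ≤ (P.rootSet F).ncard := by
        refine Set.ncard_le_ncard (fun z hz => ?_) (Set.toFinite _)
        rw [mem_rootSet]
        simp_all [P, sub_eq_zero]
    _ ≤ N := hdeg ▸ ncard_rootSet_le P F

theorem setOf_pow_eq_mul_eq_setOf_mul {N : ℕ} {a w : F} (hw : w ≠ 0)
    (hwa : w ^ N = a * w) : {z : F | z ^ N = a * z} = {z | ∃ c, c ^ N = c ∧ z = c * w} := by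
  have ha : a ≠ 0 := by rintro rfl; simp_all
  ext z
  constructor
  · intro hz
    refine ⟨z / w, ?_, (div_mul_cancel₀ z hw).symm⟩
    rw [Set.mem_ofPred_eq] at hz
    rw [div_pow, hz, hwa, mul_div_mul_left z w ha]
  · rintro ⟨c, hc, rfl⟩
    rw [Set.mem_ofPred_eq, mul_pow, hc, hwa, mul_left_comm]

def twistedMap (σ φ : F →+* F) (ε h : F) : F →+ F where
  toFun x := φ x + ε * (h / σ (φ h)) * σ (φ x)
  map_zero' := by simp
  map_add' x y := by simp only [map_add]; ring

theorem twistedMap_apply (σ φ : F →+* F) (ε h x : F) :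
    twistedMap σ φ ε h x = φ x + ε * (h / σ (φ h)) * σ (φ x) := rfl

section FiniteField

variable [Fintype F] {N : ℕ}

theorem two_le_of_card_eq_mul_self (hF : Fintype.card F = N * N) : 2 ≤ N := by
  have := hF ▸ Fintype.one_lt_card (α := F)
  nlinarith

theorem pow_pow_of_card_eq_mul_self (hF : Fintype.card F = N * N) (x : F) : (x ^ N) ^ N = x := by
  rw [← pow_mul, ← hF, FiniteField.pow_card]

theorem twistedMap_pow (hF : Fintype.card F = N * N) {σ : F →+* F} (hσ : ∀ x, σ x = x ^ N)
    (φ : F →+* F) {ε h : F} (hε : ε * ε = 1) (hh : h ^ (N + 1) = -1) (x : F) :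
    twistedMap σ φ ε h x ^ N = ε * (h ^ N / φ h) * twistedMap σ φ ε h x := by
  have hσσ : ∀ y, σ (σ y) = y := fun y => by rw [hσ, hσ, pow_pow_of_card_eq_mul_self hF]
  have hσε : σ ε = ε := by
    rcases mul_self_eq_one_iff.mp hε with rfl | rfl <;> simp
  have hh' : h * h ^ N = -1 := by rw [← pow_succ', hh]
  have hφh : φ h * σ (φ h) = -1 := by
    rw [hσ, ← map_pow, ← map_mul, ← pow_succ', hh, map_neg, map_one]
  have hφh₀ : φ h ≠ 0 := left_ne_zero_of_mul (hφh ▸ neg_ne_zero.mpr one_ne_zero)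
  have hσφh₀ : σ (φ h) ≠ 0 := right_ne_zero_of_mul (hφh ▸ neg_ne_zero.mpr one_ne_zero)
  rw [← hσ, ← hσ, twistedMap_apply, map_add, map_mul, map_mul, map_div₀, hσσ, hσσ, hσε, hσ h]
  field_simp
  linear_combination σ (φ x) * (hφh - ε * ε * hh' + hε)

theorem twistedMap_card_ker_le (hF : Fintype.card F = N * N) {σ : F →+* F}
    (hσ : ∀ x, σ x = x ^ N) (φ : F →+* F) (ε h : F) :
    Nat.card (twistedMap σ φ ε h).ker ≤ N := by
  set b := -ε * (h / σ (φ h))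
  have hmaps : ∀ x ∈ ((twistedMap σ φ ε h).ker : Set F), σ (φ x) ∈ {u : F | u ^ N = b * u} := by
    intro x hx
    have hx : φ x + ε * (h / σ (φ h)) * σ (φ x) = 0 := hx
    rw [Set.mem_ofPred_eq, hσ, pow_pow_of_card_eq_mul_self hF, ← hσ]
    linear_combination hx
  rw [← SetLike.coe_sort_coe, Nat.card_coe_set_eq]
  calc _ ≤ {u : F | u ^ N = b * u}.ncard :=
        Set.ncard_le_ncard_of_injOn _ hmaps ((σ.injective.comp φ.injective).injOn) (Set.toFinite _)
    _ ≤ N := ncard_setOf_pow_eq_mul_le (two_le_of_card_eq_mul_self hF) b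

theorem le_ncard_range_twistedMap (hF : Fintype.card F = N * N) {σ : F →+* F}
    (hσ : ∀ x, σ x = x ^ N) (φ : F →+* F) (ε h : F) :
    N ≤ (Set.range (twistedMap σ φ ε h)).ncard :=
  AddMonoidHom.le_ncard_range _ (by rw [Nat.card_eq_fintype_card, hF])
    (twistedMap_card_ker_le hF hσ φ ε h)

theorem range_twistedMap (hF : Fintype.card F = N * N) {σ : F →+* F} (hσ : ∀ x, σ x = x ^ N)
    (φ : F →+* F) {ε h : F} (hε : ε * ε = 1) (hh : h ^ (N + 1) = -1) :
    Set.range (twistedMap σ φ ε h) = {z | z ^ N = ε * (h ^ N / φ h) * z} := by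
  refine Set.eq_of_subset_of_ncard_le ?_ ?_ (Set.toFinite _)
  · rintro _ ⟨x, rfl⟩
    exact twistedMap_pow hF hσ φ hε hh x
  · exact (ncard_setOf_pow_eq_mul_le (two_le_of_card_eq_mul_self hF) _).trans
      (le_ncard_range_twistedMap hF hσ φ ε h)

theorem exists_range_twistedMap_eq_setOf_mul (hF : Fintype.card F = N * N) {σ : F →+* F}
    (hσ : ∀ x, σ x = x ^ N) (φ : F →+* F) {ε h : F} (hε : ε * ε = 1) (hh : h ^ (N + 1) = -1) :
    ∃ w : F, w ≠ 0 ∧ Set.range (twistedMap σ φ ε h) = {z | ∃ c, c ^ N = c ∧ z = c * w} := by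
  have hN : 1 < (Set.range (twistedMap σ φ ε h)).ncard :=
    (two_le_of_card_eq_mul_self hF).trans (le_ncard_range_twistedMap hF hσ φ ε h)
  obtain ⟨w, hw, hw₀⟩ := Set.exists_ne_of_one_lt_ncard hN 0
  rw [range_twistedMap hF hσ φ hε hh] at hw ⊢
  exact ⟨w, hw₀, setOf_pow_eq_mul_eq_setOf_mul hw₀ hw⟩

end FiniteField

theorem exists_ringHom_apply_eq_pow_pow {p r q : ℕ} (hp : p.Prime) (hq : q = p ^ r) [CharP F p]
    (m : ℕ) : ∃ φ : F →+* F, ∀ x, φ x = x ^ q ^ m :=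
  have : Fact p.Prime := ⟨hp⟩
  ⟨iterateFrobenius F p (r * m), fun x => by rw [iterateFrobenius_def, hq, pow_mul]⟩

end

theorem stmt3_general (p r q t : ℕ) (hp : p.Prime) (hq : q = p ^ r)
    (F : Type*) [Field F] [Fintype F] (hcard : Fintype.card F = q ^ (2 * t))
    (h : F) (hh : h ^ (q ^ t + 1) = -1) :
    (∀ x : F, (Lmap q t h x) ^ q ^ t = -(h ^ q ^ t / h ^ q) * Lmap q t h x) ∧
    (∀ x : F, (Mmap q t h x) ^ q ^ t = h ^ q ^ t / h ^ q ^ (t - 1) * Mmap q t h x) ∧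
    ({z : F | ∃ x : F, Lmap q t h x = z} =
      {z : F | z ^ q ^ t + h ^ q ^ t / h ^ q * z = 0}) ∧
    ({z : F | ∃ x : F, Mmap q t h x = z} =
      {z : F | z ^ q ^ t - h ^ q ^ t / h ^ q ^ (t - 1) * z = 0}) ∧
    (∃ w : F, w ≠ 0 ∧ {z : F | ∃ x : F, Lmap q t h x = z} =
      {z : F | ∃ c : F, c ^ q ^ t = c ∧ z = c * w}) ∧
    (∃ w : F, w ≠ 0 ∧ {z : F | ∃ x : F, Mmap q t h x = z} =
      {z : F | ∃ c : F, c ^ q ^ t = c ∧ z = c * w}) := by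
  have : Fact p.Prime := ⟨hp⟩
  have : CharP F p := charP_of_card_eq_prime_pow (f := r * (2 * t)) (by rw [hcard, hq, ← pow_mul])
  have hF : Fintype.card F = q ^ t * q ^ t := by rw [hcard, two_mul, pow_add]
  have ht₀ : t ≠ 0 := by
    rintro rfl
    simpa using two_le_of_card_eq_mul_self hF
  obtain ⟨σ, hσ⟩ := exists_ringHom_apply_eq_pow_pow hp hq (F := F) t
  obtain ⟨φL, hφL⟩ := exists_ringHom_apply_eq_pow_pow hp hq (F := F) 1
  obtain ⟨φM, hφM⟩ := exists_ringHom_apply_eq_pow_pow hp hq (F := F) (t - 1)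
  have hL : Lmap q t h = twistedMap σ φL (-1) h := by
    funext x
    simp only [Lmap, twistedMap_apply, hσ, hφL, ← pow_mul, pow_one]
    ring
  have hM : Mmap q t h = twistedMap σ φM 1 h := by
    funext x
    have : 2 * t - 1 = t - 1 + t := by omega
    simp only [Mmap, twistedMap_apply, hσ, hφM, ← pow_mul, ← pow_add, this]
    ring
  have hεL : (-1 : F) * -1 = 1 := by norm_num
  have hεM : (1 : F) * 1 = 1 := one_mul 1
  simp only [hL, hM]
  refine ⟨fun x => ?_, fun x => ?_, ?_, ?_, exists_range_twistedMap_eq_setOf_mul hF hσ φL hεL hh,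
    exists_range_twistedMap_eq_setOf_mul hF hσ φM hεM hh⟩
  · rw [twistedMap_pow hF hσ φL hεL hh, hφL, pow_one, neg_one_mul]
  · rw [twistedMap_pow hF hσ φM hεM hh, hφM, one_mul]
  · change Set.range _ = _
    rw [range_twistedMap hF hσ φL hεL hh, hφL, pow_one]
    ext z
    simp only [Set.mem_ofPred_eq, neg_mul, one_mul, eq_neg_iff_add_eq_zero]
  · change Set.range _ = _
    rw [range_twistedMap hF hσ φM hεM hh, hφM]
    ext z
    simp only [Set.mem_ofPred_eq, one_mul, sub_eq_zero]

/-- `L(x)^{q^t} = -h^{q^t-q} L(x)` and `M(x)^{q^t} = h^{q^t-q^{t-1}} M(x)`; consequently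
`im L = {z : z^{q^t} + h^{q^t-q} z = 0}` and `im M = {z : z^{q^t} - h^{q^t-q^{t-1}} z = 0}`,
and each of these is a 1-dimensional `𝔽_{q^t}`-subspace of `𝔽_{q^n}`. -/
theorem stmt3 (p r q t : ℕ) (hp : p.Prime) (hpodd : Odd p) (hr : 0 < r)
    (hq : q = p ^ r) (ht : 3 ≤ t)
    (F : Type*) [Field F] [Fintype F] (hcard : Fintype.card F = q ^ (2 * t))
    (h : F) (hh : h ^ (q ^ t + 1) = -1) :
    (∀ x : F, (Lmap q t h x) ^ q ^ t = -(h ^ q ^ t / h ^ q) * Lmap q t h x) ∧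
    (∀ x : F, (Mmap q t h x) ^ q ^ t = h ^ q ^ t / h ^ q ^ (t - 1) * Mmap q t h x) ∧
    ({z : F | ∃ x : F, Lmap q t h x = z} =
      {z : F | z ^ q ^ t + h ^ q ^ t / h ^ q * z = 0}) ∧
    ({z : F | ∃ x : F, Mmap q t h x = z} =
      {z : F | z ^ q ^ t - h ^ q ^ t / h ^ q ^ (t - 1) * z = 0}) ∧
    (∃ w : F, w ≠ 0 ∧ {z : F | ∃ x : F, Lmap q t h x = z} =
      {z : F | ∃ c : F, c ^ q ^ t = c ∧ z = c * w}) ∧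
    (∃ w : F, w ≠ 0 ∧ {z : F | ∃ x : F, Mmap q t h x = z} =
      {z : F | ∃ c : F, c ^ q ^ t = c ∧ z = c * w}) :=
  stmt3_general p r q t hp hq F hcard h hh
end

section
/- Let ρ, τ ∈ 𝔽_{q^n} be nonzero elements with R(ρ) = 0 and T(τ) = 0. Then ρ ∉ 𝔽_{q^t} and τ ∉ 𝔽_{q^t}; consequently {1, ρ} and {1, τ} are 𝔽_{q^t}-bases of 𝔽_{q^n}. -/
/-- The map `R(x) = x^{q^t} + h^{q^{t-1}-q} x`, with `h^{q^i-q^j} = h^{q^i} / h^{q^j}`. -/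
def Rmap {F : Type*} [Field F] (q t : ℕ) (h : F) (x : F) : F :=
  x ^ q ^ t + h ^ q ^ (t - 1) / h ^ q * x

/-- The map `T(x) = x^{q^t} + h^{q-q^{t-1}} x`, with `h^{q^i-q^j} = h^{q^i} / h^{q^j}`. -/
def Tmap {F : Type*} [Field F] (q t : ℕ) (h : F) (x : F) : F :=
  x ^ q ^ t + h ^ q / h ^ q ^ (t - 1) * x

/-- Key contradiction: if `h^{q^t+1} = -1` and `h^{q^{t-1}} = -h^q`, false. -/
lemma key_contra {F : Type*} [Field F] [Fintype F] (q t : ℕ) (hqodd : Odd q)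
    (ht : 3 ≤ t) (hcard : Fintype.card F = q ^ (2 * t)) (hne : (-1 : F) ≠ 1)
    (h : F) (hh0 : h ≠ 0) (hh : h ^ (q ^ t + 1) = -1)
    (hB : h ^ q ^ (t - 1) = - h ^ q) : False := by
  have hht : h ^ q ^ t * h = -1 := by
    rw [← pow_succ, hh]
  -- apply Frobenius to hB
  have hfrob : h ^ q ^ t = - h ^ q ^ 2 := by
    have h1 : (h ^ q ^ (t - 1)) ^ q = h ^ q ^ t := by
      rw [← pow_mul, ← pow_succ]
      congr 2
      omega
    have h2 : (- h ^ q) ^ q = - h ^ q ^ 2 := by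
      rw [hqodd.neg_pow, ← pow_mul, sq]
    rw [← h1, hB, h2]
  have hq2mul : h ^ q ^ 2 * h = 1 := by
    have h3 : - (h ^ q ^ 2 * h) = -1 := by rw [← neg_mul, ← hfrob, hht]
    exact neg_injective h3
  have hq2 : h ^ q ^ 2 = h⁻¹ := eq_inv_of_mul_eq_one_left (by linear_combination hq2mul)
  have hq4 : h ^ q ^ 4 = h := by
    have e : h ^ q ^ 4 = (h ^ q ^ 2) ^ q ^ 2 := by
      rw [← pow_mul]; congr 1; ring
    rw [e, hq2, inv_pow, hq2, inv_inv]
  -- periodicity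
  have hper : ∀ m k : ℕ, h ^ q ^ (m + 4 * k) = h ^ q ^ m := by
    intro m k
    induction k with
    | zero => simp
    | succ k ih =>
      have e : m + 4 * (k + 1) = (m + 4 * k) + 4 := by ring
      rw [e, pow_add, pow_mul, ih, ← pow_mul, mul_comm, pow_mul, hq4]
  have hpc : h ^ q ^ (2 * t) = h := by
    rw [← hcard]
    exact FiniteField.pow_card h
  have hsq_ne : ¬ (h * h = 1) := by
    intro hsq
    obtain ⟨w, hw⟩ := hqodd.pow (n := t)
    have he : q ^ t + 1 = 2 * (w + 1) := by omega
    have e : h ^ (q ^ t + 1) = (h * h) ^ (w + 1) := by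
      rw [he, pow_mul, sq]
    rw [hh, hsq, one_pow] at e
    exact hne e
  rcases Nat.even_or_odd t with hte | hto
  · obtain ⟨s, hs⟩ := hte
    rcases Nat.even_or_odd s with hse | hso
    · -- t ≡ 0 mod 4: h^{q^t} = h, so h^2 = -1; 4 ∣ q^2-1 gives h^{q^2} = h, contr.
      obtain ⟨c, hc⟩ := hse
      have hc1 : t = 0 + 4 * c := by omega
      have hqt : h ^ q ^ t = h := by rw [hc1, hper]; simp
      rw [hqt] at hht
      have h4 : h ^ (4:ℕ) = 1 := by
        have e : h ^ (4:ℕ) = (h * h) * (h * h) := by ring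
        rw [e, hht]; ring
      obtain ⟨a, ha⟩ := hqodd
      have hq2e : q ^ 2 = 4 * (a * a + a) + 1 := by subst ha; ring
      have e : h ^ q ^ 2 = h := by
        rw [hq2e, pow_add, pow_mul, h4, one_pow, one_mul, pow_one]
      rw [e] at hq2mul
      exact hsq_ne hq2mul
    · -- t ≡ 2 mod 4: h^{q^t} = h⁻¹, contradiction with hht
      obtain ⟨c, hc⟩ := hso
      have hc1 : t = 2 + 4 * c := by omega
      have hqt : h ^ q ^ t = h⁻¹ := by rw [hc1, hper, hq2]
      rw [hqt, inv_mul_cancel₀ hh0] at hht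
      exact hne hht.symm
  · -- t odd: 2t ≡ 2 mod 4, so h = h^{q^{2t}} = h⁻¹
    obtain ⟨s, hs⟩ := hto
    have hc1 : 2 * t = 2 + 4 * s := by omega
    have e : h ^ q ^ (2 * t) = h⁻¹ := by rw [hc1, hper, hq2]
    rw [hpc] at e
    have e2 : h * h = 1 := by nth_rewrite 2 [e]; exact mul_inv_cancel₀ hh0
    exact hsq_ne e2

/-- If `ρ, τ ≠ 0`, `R(ρ) = 0` and `T(τ) = 0`, then `ρ, τ ∉ 𝔽_{q^t}`; consequently `{1, ρ}`
and `{1, τ}` are `𝔽_{q^t}`-bases of `𝔽_{q^n}` (spanning plus independence). -/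
theorem stmt4 (p r q t : ℕ) (hp : p.Prime) (hpodd : Odd p) (hr : 0 < r)
    (hq : q = p ^ r) (ht : 3 ≤ t)
    (F : Type*) [Field F] [Fintype F] (hcard : Fintype.card F = q ^ (2 * t))
    (h : F) (hh : h ^ (q ^ t + 1) = -1)
    (ρ τ : F) (hρ : ρ ≠ 0) (hτ : τ ≠ 0)
    (hRρ : Rmap q t h ρ = 0) (hTτ : Tmap q t h τ = 0) :
    ρ ^ q ^ t ≠ ρ ∧ τ ^ q ^ t ≠ τ ∧
    (∀ γ : F, ∃ a b : F, a ^ q ^ t = a ∧ b ^ q ^ t = b ∧ γ = a + b * ρ) ∧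
    (∀ a b : F, a ^ q ^ t = a → b ^ q ^ t = b → a + b * ρ = 0 → a = 0 ∧ b = 0) ∧
    (∀ γ : F, ∃ a b : F, a ^ q ^ t = a ∧ b ^ q ^ t = b ∧ γ = a + b * τ) ∧
    (∀ a b : F, a ^ q ^ t = a → b ^ q ^ t = b → a + b * τ = 0 → a = 0 ∧ b = 0) := by
  -- characteristic
  obtain ⟨n, hcp, hcn⟩ := FiniteField.card F (ringChar F)
  have hchar : ringChar F = p := by
    have hdvd : ringChar F ∣ p ^ (r * (2 * t)) := by
      rw [pow_mul, ← hq, ← hcard, hcn]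
      exact dvd_pow_self _ (by positivity)
    exact (Nat.prime_dvd_prime_iff_eq hcp hp).mp (hcp.dvd_of_dvd_pow hdvd)
  haveI : CharP F p := ringChar.of_eq hchar
  haveI : Fact p.Prime := ⟨hp⟩
  have hp2 : p ≠ 2 := by
    rintro rfl
    exact (Nat.not_odd_iff_even.mpr even_two) hpodd
  have hne : (-1 : F) ≠ 1 := Ring.neg_one_ne_one_of_char_ne_two (by rw [hchar]; exact hp2)
  have hqodd : Odd q := hq ▸ hpodd.pow
  have hh0 : h ≠ 0 := by
    rintro rfl
    rw [zero_pow (by positivity)] at hh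
    exact (neg_ne_zero.mpr one_ne_zero) hh.symm
  have hhq0 : h ^ q ≠ 0 := pow_ne_zero _ hh0
  have hht10 : h ^ q ^ (t - 1) ≠ 0 := pow_ne_zero _ hh0
  -- ρ and τ are not fixed by x ↦ x^{q^t}
  have p1 : ρ ^ q ^ t ≠ ρ := by
    intro hfix
    unfold Rmap at hRρ
    rw [hfix] at hRρ
    have hB : h ^ q ^ (t - 1) = - h ^ q := by
      have e : (1 + h ^ q ^ (t - 1) / h ^ q) * ρ = 0 := by rw [← hRρ]; ring
      rcases mul_eq_zero.mp e with h1 | h1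
      · field_simp at h1
        linear_combination h1
      · exact absurd h1 hρ
    exact key_contra q t hqodd ht hcard hne h hh0 hh hB
  have p2 : τ ^ q ^ t ≠ τ := by
    intro hfix
    unfold Tmap at hTτ
    rw [hfix] at hTτ
    have hB : h ^ q ^ (t - 1) = - h ^ q := by
      have e : (1 + h ^ q / h ^ q ^ (t - 1)) * τ = 0 := by rw [← hTτ]; ring
      rcases mul_eq_zero.mp e with h1 | h1
      · field_simp at h1
        linear_combination h1
      · exact absurd h1 hτ
    exact key_contra q t hqodd ht hcard hne h hh0 hh hB
  -- x ↦ x^{q^t} is additive and an involution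
  have hqt : q ^ t = p ^ (r * t) := by rw [hq, ← pow_mul]
  have hsub : ∀ x y : F, (x - y) ^ q ^ t = x ^ q ^ t - y ^ q ^ t := by
    intro x y; rw [hqt]; exact sub_pow_char_pow x y (r * t)
  have hinvol : ∀ x : F, (x ^ q ^ t) ^ q ^ t = x := by
    intro x
    rw [← pow_mul, ← sq, ← pow_mul, mul_comm t 2, ← hcard]
    exact FiniteField.pow_card x
  have hNodd : Odd (q ^ t) := hqodd.pow
  have main : ∀ ξ : F, ξ ^ q ^ t ≠ ξ →
      (∀ γ : F, ∃ a b : F, a ^ q ^ t = a ∧ b ^ q ^ t = b ∧ γ = a + b * ξ) ∧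
      (∀ a b : F, a ^ q ^ t = a → b ^ q ^ t = b → a + b * ξ = 0 → a = 0 ∧ b = 0) := by
    intro ξ hξ
    have hD : ξ - ξ ^ q ^ t ≠ 0 := fun hD => hξ (by linear_combination -hD)
    constructor
    · intro γ
      set b : F := (γ - γ ^ q ^ t) / (ξ - ξ ^ q ^ t) with hbdef
      have hbfix : b ^ q ^ t = b := by
        rw [hbdef, div_pow, hsub, hsub, hinvol, hinvol,
          show γ ^ q ^ t - γ = -(γ - γ ^ q ^ t) by ring,
          show ξ ^ q ^ t - ξ = -(ξ - ξ ^ q ^ t) by ring, neg_div_neg_eq]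
      have hb' : b * (ξ ^ q ^ t - ξ) = γ ^ q ^ t - γ := by
        rw [hbdef, div_mul_eq_mul_div, div_eq_iff hD]
        ring
      refine ⟨γ - b * ξ, b, ?_, hbfix, by ring⟩
      rw [hsub, mul_pow, hbfix]
      linear_combination -hb'
    · intro a b ha hb hab
      by_cases hb0 : b = 0
      · subst hb0
        simp at hab
        exact ⟨hab, rfl⟩
      · exfalso
        apply hξ
        have hξeq : ξ = -(a / b) := by
          field_simp
          linear_combination hab
        rw [hξeq, hNodd.neg_pow, div_pow, ha, hb]
  obtain ⟨s1, i1⟩ := main ρ p1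
  obtain ⟨s2, i2⟩ := main τ p2
  exact ⟨p1, p2, s1, i1, s2, i2⟩
end

section
/- Let u, v ∈ 𝔽_{q^n} be nonzero elements with L(u) = 0 and M(v) = 0, and let b ∈ 𝔽_{q^n}. The following are equivalent: (i) T(b) = 0; (ii) M(b·u) = 0; (iii) b·L(v) lies in the image of M. -/
/-- For nonzero `u ∈ ker L`, `v ∈ ker M` and any `b`, the following are equivalent:
`T(b) = 0`; `M(bu) = 0`; `b·L(v) ∈ im M`. -/
theorem stmt7 (p r q t : ℕ) (hp : p.Prime) (hpodd : Odd p) (hr : 0 < r)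
    (hq : q = p ^ r) (ht : 3 ≤ t)
    (F : Type*) [Field F] [Fintype F] (hcard : Fintype.card F = q ^ (2 * t))
    (h : F) (hh : h ^ (q ^ t + 1) = -1)
    (u v : F) (hu : u ≠ 0) (hv : v ≠ 0)
    (hLu : Lmap q t h u = 0) (hMv : Mmap q t h v = 0) (b : F) :
    (Tmap q t h b = 0 ↔ Mmap q t h (b * u) = 0) ∧
    (Tmap q t h b = 0 ↔ ∃ y : F, Mmap q t h y = b * Lmap q t h v) := by
  have hq1 : 1 < q := hq ▸ Nat.one_lt_pow (by omega) hp.one_lt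
  have q0 : q ≠ 0 := by omega
  -- characteristic
  haveI hCF : CharP F (ringChar F) := ringChar.charP F
  obtain ⟨n', hpc, hcard'⟩ := FiniteField.card F (ringChar F)
  have hdvd : p ∣ Fintype.card F := by
    rw [hcard, hq, ← pow_mul]
    exact dvd_pow_self p (Nat.mul_ne_zero (by omega) (by omega))
  have hppc : p = ringChar F := by
    rw [hcard'] at hdvd
    exact (Nat.prime_dvd_prime_iff_eq hp hpc).mp (hp.dvd_of_dvd_pow hdvd)
  haveI : CharP F p := hppc ▸ hCF
  haveI : Fact p.Prime := ⟨hp⟩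
  -- Frobenius facts
  have frob : ∀ (a : ℕ) (x y : F), (x + y) ^ q ^ a = x ^ q ^ a + y ^ q ^ a := by
    intro a x y
    rw [hq, ← pow_mul]
    exact add_pow_char_pow x y p (r * a)
  have hqodd : Odd q := by rw [hq]; exact hpodd.pow
  have hqa : ∀ a : ℕ, Odd (q ^ a) := fun a => hqodd.pow
  have fneg : ∀ (a : ℕ) (x : F), (-x) ^ q ^ a = -x ^ q ^ a := fun a x => (hqa a).neg_pow x
  have fQQ : ∀ (x : F) (a c : ℕ), (x ^ q ^ a) ^ q ^ c = x ^ q ^ (a + c) := fun x a c => by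
    rw [← pow_mul, ← pow_add]
  have fred : ∀ (x : F) (a : ℕ), x ^ q ^ (2 * t + a) = x ^ q ^ a := by
    intro x a
    rw [← fQQ, ← hcard, FiniteField.pow_card]
  have fred0 : ∀ x : F, x ^ q ^ (2 * t) = x := by
    intro x; rw [← hcard]; exact FiniteField.pow_card x
  have two_pow : ∀ a : ℕ, (2 : F) ^ q ^ a = 2 := by
    intro a; have := frob a 1 1; norm_num at this; exact this
  have two0 : (2 : F) ≠ 0 := by
    have h2 : ((2 : ℕ) : F) ≠ 0 := by
      rw [Ne, CharP.cast_eq_zero_iff F p]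
      intro hdvd2
      have := (Nat.prime_dvd_prime_iff_eq hp Nat.prime_two).mp hdvd2
      subst this
      exact (by decide : ¬ Odd 2) hpodd
    simpa using h2
  have one_ne_neg : (1 : F) ≠ -1 := by
    intro hx; exact two0 (by linear_combination hx)
  have h0 : h ≠ 0 := by
    intro h00; rw [h00, zero_pow (by positivity)] at hh
    exact one_ne_zero (by linear_combination hh)
  have hpowne : ∀ a : ℕ, h ^ q ^ a ≠ 0 := fun a => pow_ne_zero _ h0
  have hX1 : h ^ q ≠ 0 := pow_ne_zero _ h0
  have hX2 : h ^ q ^ 2 ≠ 0 := hpowne 2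
  have hY1 : h ^ q ^ (t - 1) ≠ 0 := hpowne _
  have hY2 : h ^ q ^ (t - 2) ≠ 0 := hpowne _
  have hht : h ^ q ^ t * h = -1 := by
    have := hh; rwa [pow_add, pow_one] at this
  have hst : h ^ q ^ t = -h⁻¹ := by
    field_simp
    linear_combination hht
  have hshift : ∀ a : ℕ, h ^ q ^ (t + a) = -(h ^ q ^ a)⁻¹ := by
    intro a
    rw [← fQQ, hst, fneg, inv_pow]
  have hs_a : h ^ q ^ (2 * t - 1) = -(h ^ q ^ (t - 1))⁻¹ := by
    rw [show 2 * t - 1 = t + (t - 1) by omega]; exact hshift _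
  have hs_b : h ^ q ^ (2 * t - 2) = -(h ^ q ^ (t - 2))⁻¹ := by
    rw [show 2 * t - 2 = t + (t - 2) by omega]; exact hshift _
  have hs_c : h ^ q ^ (t + 1) = -(h ^ q)⁻¹ := by
    have := hshift 1; rwa [pow_one] at this
  have hs_d : h ^ q ^ (t + 2) = -(h ^ q ^ 2)⁻¹ := hshift 2
  -- u relation
  have hLu' : u ^ q = h / h ^ q ^ (t + 1) * u ^ q ^ (t + 1) := by
    have := hLu; unfold Lmap at this; exact sub_eq_zero.mp this
  have hu1 : u ^ q ^ (2 * t - 1) = -(h ^ q ^ (t - 2))⁻¹ / h ^ q ^ (t - 1) * u ^ q ^ (t - 1) := by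
    have e1 : (u ^ q) ^ q ^ (2 * t - 2)
        = (h / h ^ q ^ (t + 1) * u ^ q ^ (t + 1)) ^ q ^ (2 * t - 2) := by rw [hLu']
    rw [mul_pow, div_pow, fQQ, fQQ, ← pow_mul, ← pow_succ'] at e1
    rw [show (t + 1) + (2 * t - 2) = 2 * t + (t - 1) by omega, fred, fred,
      show 2 * t - 2 + 1 = 2 * t - 1 by omega, hs_b] at e1
    exact e1
  -- v relations
  have hMv' : v ^ q ^ (t - 1) = -(h / h ^ q ^ (2 * t - 1) * v ^ q ^ (2 * t - 1)) := by
    have := hMv; unfold Mmap at this; linear_combination this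
  have hv1 : v ^ q ^ t = -(h ^ q * h⁻¹) * v := by
    have e1 : (v ^ q ^ (t - 1)) ^ q ^ (t + 1)
        = (-(h / h ^ q ^ (2 * t - 1) * v ^ q ^ (2 * t - 1))) ^ q ^ (t + 1) := by rw [hMv']
    rw [fneg, mul_pow, div_pow, fQQ, fQQ, fQQ] at e1
    rw [show (t - 1) + (t + 1) = 2 * t by omega, fred0,
      show (2 * t - 1) + (t + 1) = 2 * t + t by omega, fred, fred, hst, hs_c] at e1
    field_simp at e1 ⊢
    linear_combination e1
  have hv2 : (v ^ q) ^ q ^ t = -(h ^ q ^ 2 * (h ^ q)⁻¹) * v ^ q := by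
    have e0 : (v ^ q) ^ q ^ t = (v ^ q ^ t) ^ q := by
      rw [← pow_mul, ← pow_mul, mul_comm]
    rw [e0, hv1, mul_pow, hqodd.neg_pow, mul_pow, inv_pow, ← pow_mul, ← pow_two]
  have hLv : Lmap q t h v = v ^ q * (1 - h * h ^ q ^ 2) := by
    unfold Lmap
    have hvt1 : v ^ q ^ (t + 1) = -(h ^ q ^ 2 * (h ^ q)⁻¹) * v ^ q := by
      rw [show t + 1 = 1 + t by omega, ← fQQ, pow_one]; exact hv2
    rw [hvt1, hs_c]
    field_simp
  -- Part 1
  have step1 : Mmap q t h (b * u)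
      = u ^ q ^ (t - 1) * (b ^ q ^ (t - 1) + h * (h ^ q ^ (t - 2))⁻¹ * b ^ q ^ (2 * t - 1)) := by
    unfold Mmap
    rw [mul_pow, mul_pow, hu1, hs_a]
    field_simp
  have frob1 : ∀ x y : F, (x + y) ^ q = x ^ q + y ^ q := by
    intro x y; have := frob 1 x y; rwa [pow_one] at this
  have powq : ∀ (x : F) (a : ℕ), (x ^ q ^ a) ^ q = x ^ q ^ (a + 1) := by
    intro x a; rw [← pow_mul, ← pow_succ]
  have step2 : Tmap q t h b
      = (b ^ q ^ (t - 1) + h * (h ^ q ^ (t - 2))⁻¹ * b ^ q ^ (2 * t - 1)) ^ q := by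
    unfold Tmap
    rw [frob1, mul_pow, mul_pow, inv_pow, powq, powq, powq]
    rw [show t - 1 + 1 = t by omega, show t - 2 + 1 = t - 1 by omega,
      show 2 * t - 1 + 1 = 2 * t by omega, fred0]
    field_simp
  have part1 : Tmap q t h b = 0 ↔ Mmap q t h (b * u) = 0 := by
    rw [step1, step2, pow_eq_zero_iff q0, mul_eq_zero]
    have hu0 : u ^ q ^ (t - 1) ≠ 0 := pow_ne_zero _ hu
    tauto
  -- Part 2
  have I6 : ∀ y : F, (Mmap q t h y) ^ q ^ t
      = -(h⁻¹ * (h ^ q ^ (t - 1))⁻¹) * Mmap q t h y := by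
    intro y
    unfold Mmap
    rw [frob, mul_pow, div_pow, fQQ, fQQ, fQQ]
    rw [show (t - 1) + t = 2 * t - 1 by omega, show (2 * t - 1) + t = 2 * t + (t - 1) by omega,
      fred, fred, hst, hs_a]
    field_simp
    ring
  have hs' : (1 - h * h ^ q ^ 2) ^ q ^ t = 1 - h⁻¹ * (h ^ q ^ 2)⁻¹ := by
    rw [sub_eq_add_neg, frob, fneg, one_pow, mul_pow, hst, fQQ, show 2 + t = t + 2 by omega, hs_d]
    field_simp
    ring
  have I3 : (b * Lmap q t h v) ^ q ^ t - -(h⁻¹ * (h ^ q ^ (t - 1))⁻¹) * (b * Lmap q t h v)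
      = (v ^ q * (-(h ^ q)⁻¹ * h ^ q ^ 2) * (1 - h⁻¹ * (h ^ q ^ 2)⁻¹)) * Tmap q t h b := by
    rw [hLv]
    unfold Tmap
    rw [mul_pow, mul_pow, hv2, hs']
    field_simp
    ring
  have I4 : ∀ z : F, z ^ q ^ t = -(h⁻¹ * (h ^ q ^ (t - 1))⁻¹) * z →
      Mmap q t h (2⁻¹ * z ^ q ^ (t + 1)) = z := by
    intro z hz
    unfold Mmap
    rw [mul_pow, mul_pow, fQQ, fQQ, inv_pow, inv_pow, two_pow, two_pow]
    rw [show (t + 1) + (t - 1) = 2 * t by omega, fred0,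
      show (t + 1) + (2 * t - 1) = 2 * t + t by omega, fred, hz, hs_a]
    field_simp
    ring
  -- the key nonvanishing fact
  have hcontra : h * h ^ q ^ 2 ≠ 1 := by
    intro hA
    have hA' : h ^ q ^ 2 = h⁻¹ := eq_inv_of_mul_eq_one_right hA
    have hk : ∀ k : ℕ, h ^ q ^ (2 * k) = if Even k then h else h⁻¹ := by
      intro k
      induction k with
      | zero => simp
      | succ m ih =>
        rw [show 2 * (m + 1) = 2 * m + 2 by omega, ← fQQ, ih]
        by_cases hm : Even m
        · rw [if_pos hm, if_neg (by simp [Nat.even_add_one, hm]), hA']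
        · rw [if_neg hm, if_pos (by simp [Nat.even_add_one, hm]), inv_pow, hA', inv_inv]
    have hsq : h ^ 2 = 1 → False := by
      intro h2
      rcases (mul_self_eq_one_iff (a := h)).mp (by rw [← pow_two]; exact h2) with h1 | h1
      · rw [h1] at hht
        simp only [one_pow, mul_one] at hht
        exact one_ne_neg hht
      · rw [h1, (hqa t).neg_one_pow] at hht
        exact one_ne_neg (by linear_combination hht)
    rcases Nat.even_or_odd t with hte | hto
    · obtain ⟨m, hm⟩ := hte
      have htq : h ^ q ^ t = h ^ q ^ (2 * m) := by rw [show t = 2 * m by omega]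
      rcases Nat.even_or_odd m with hme | hmo
      · have h2 : h * h = -1 := by
          rw [← hht, htq, hk, if_pos hme]
        obtain ⟨d, hd⟩ := hqodd
        have hq2 : q ^ 2 = 4 * (d * d + d) + 1 := by rw [hd]; ring
        have h4 : h ^ (4 : ℕ) = 1 := by
          have : h ^ (2 : ℕ) = -1 := by rw [pow_two]; exact h2
          calc h ^ (4 : ℕ) = (h ^ (2 : ℕ)) ^ (2 : ℕ) := by rw [← pow_mul]
          _ = 1 := by rw [this]; ring
        have he : h ^ q ^ 2 = h := by
          rw [hq2, pow_add, pow_one, pow_mul, h4, one_pow, one_mul]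
        rw [hA'] at he
        have e9 : h⁻¹ * h = h * h := by rw [he]
        rw [inv_mul_cancel₀ h0] at e9
        exact hsq (by rw [pow_two, ← e9])
      · have : (1 : F) = -1 := by
          rw [← hht, htq, hk, if_neg (Nat.not_even_iff_odd.mpr hmo), inv_mul_cancel₀ h0]
        exact one_ne_neg this
    · have h1 : h⁻¹ = h := by
        have e2 := fred0 h
        rw [hk t, if_neg (Nat.not_even_iff_odd.mpr hto)] at e2
        exact e2
      have e9 : h⁻¹ * h = h * h := by rw [h1]
      rw [inv_mul_cancel₀ h0] at e9
      exact hsq (by rw [pow_two, ← e9])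
  have hC0 : (v ^ q * (-(h ^ q)⁻¹ * h ^ q ^ 2) * (1 - h⁻¹ * (h ^ q ^ 2)⁻¹)) ≠ 0 := by
    apply mul_ne_zero
    · apply mul_ne_zero (pow_ne_zero _ hv)
      apply mul_ne_zero (neg_ne_zero.mpr (inv_ne_zero hX1)) hX2
    · intro hz
      apply hcontra
      have e3 : h⁻¹ * (h ^ q ^ 2)⁻¹ = 1 := by linear_combination -hz
      field_simp at e3
      linear_combination -e3
  have part2 : Tmap q t h b = 0 ↔ ∃ y : F, Mmap q t h y = b * Lmap q t h v := by
    constructor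
    · intro hT
      refine ⟨2⁻¹ * (b * Lmap q t h v) ^ q ^ (t + 1), I4 _ ?_⟩
      have e4 := I3
      rw [hT, mul_zero] at e4
      linear_combination e4
    · rintro ⟨y, hy⟩
      have h6 := I6 y
      rw [hy] at h6
      have e5 : (v ^ q * (-(h ^ q)⁻¹ * h ^ q ^ 2) * (1 - h⁻¹ * (h ^ q ^ 2)⁻¹))
          * Tmap q t h b = 0 := by
        rw [← I3, h6]; ring
      exact (mul_eq_zero.mp e5).resolve_left hC0
  exact ⟨part1, part2⟩
end

section
/- Let t > 4 and let h, k ∈ 𝔽_{q^n} satisfy h^{q^t+1} = k^{q^t+1} = −1. Then U_h and U_k are GL(2,q^n)-equivalent if and only if: h = k or h = −k, in case t ≢ 2 (mod 4); and h = ℓ·k for some ℓ ∈ 𝔽_{q^n} with ℓ^{q^2+1} = 1, in case t ≡ 2 (mod 4). -/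
/-- The `q`-polynomial map `ψ_{h,t}(x) = x^q + x^{q^{t-1}} - h^{1-q^{t+1}} x^{q^{t+1}}
    + h^{1-q^{2t-1}} x^{q^{2t-1}}`, where `h^{1-q^j}` means `h / h^{q^j}`. -/
def psiMap {F : Type*} [Field F] (q t : ℕ) (h : F) (x : F) : F :=
  x ^ q + x ^ q ^ (t - 1) - h / h ^ q ^ (t + 1) * x ^ q ^ (t + 1)
    + h / h ^ q ^ (2 * t - 1) * x ^ q ^ (2 * t - 1)

/-- The subspace `U_h = {(x, ψ_{h,t}(x)) : x ∈ 𝔽_{q^n}}`, as a set of column vectors. -/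
def Uspace {F : Type*} [Field F] (q t : ℕ) (h : F) : Set (Fin 2 → F) :=
  {w | ∃ x : F, w = ![x, psiMap q t h x]}

/-- `U, W ⊆ 𝔽_{q^n}²` are `GL(2,q^n)`-equivalent: some invertible matrix maps `U` onto `W`. -/
def GLEquiv {F : Type*} [Field F] (U W : Set (Fin 2 → F)) : Prop :=
  ∃ A : Matrix (Fin 2) (Fin 2) F, IsUnit A ∧ (fun w => A.mulVec w) '' U = W

section vec10
variable {α : Type*} (a0 a1 a2 a3 a4 a5 a6 a7 a8 a9 : α)
lemma v10_0 : (![a0,a1,a2,a3,a4,a5,a6,a7,a8,a9]) 0 = a0 := rfl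
lemma v10_1 : (![a0,a1,a2,a3,a4,a5,a6,a7,a8,a9]) 1 = a1 := rfl
lemma v10_2 : (![a0,a1,a2,a3,a4,a5,a6,a7,a8,a9]) 2 = a2 := rfl
lemma v10_3 : (![a0,a1,a2,a3,a4,a5,a6,a7,a8,a9]) 3 = a3 := rfl
lemma v10_4 : (![a0,a1,a2,a3,a4,a5,a6,a7,a8,a9]) 4 = a4 := rfl
lemma v10_5 : (![a0,a1,a2,a3,a4,a5,a6,a7,a8,a9]) 5 = a5 := rfl
lemma v10_6 : (![a0,a1,a2,a3,a4,a5,a6,a7,a8,a9]) 6 = a6 := rfl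
lemma v10_7 : (![a0,a1,a2,a3,a4,a5,a6,a7,a8,a9]) 7 = a7 := rfl
lemma v10_8 : (![a0,a1,a2,a3,a4,a5,a6,a7,a8,a9]) 8 = a8 := rfl
lemma v10_9 : (![a0,a1,a2,a3,a4,a5,a6,a7,a8,a9]) 9 = a9 := rfl
end vec10

lemma expVec_strictMono {t : ℕ} (ht : 4 < t) :
    StrictMono (![0, 1, 2, t-2, t-1, t, t+1, t+2, 2*t-2, 2*t-1] : Fin 10 → ℕ) := by
  intro i j hij
  fin_cases i <;> fin_cases j <;>
    simp [v10_0, v10_1, v10_2, v10_3, v10_4, v10_5, v10_6, v10_7, v10_8, v10_9,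
      Fin.mk_lt_mk, Fin.isValue, Fin.mk_zero, Fin.mk_one] at hij ⊢ <;>
    omega

lemma aux_lin_indep {F : Type*} [Field F] [Fintype F] {q : ℕ} (hq : 2 ≤ q) {n : ℕ}
    (E : Fin n → ℕ) (hE : Function.Injective E)
    (hlt : ∀ i, q ^ E i < Fintype.card F) (γ : Fin n → F)
    (H : ∀ x : F, ∑ i, γ i * x ^ q ^ E i = 0) : ∀ i, γ i = 0 := by
  classical
  intro i
  set P : Polynomial F := ∑ j, Polynomial.C (γ j) * Polynomial.X ^ (q ^ E j) with hP
  have hdeg : P.natDegree < Fintype.card F := by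
    have hb : ∀ j : Fin n, (Polynomial.C (γ j) * Polynomial.X ^ (q ^ E j)).natDegree
        ≤ Fintype.card F - 1 := by
      intro j
      refine le_trans (Polynomial.natDegree_C_mul_X_pow_le _ _) ?_
      have := hlt j; omega
    refine lt_of_le_of_lt (Polynomial.natDegree_sum_le_of_forall_le _ _ fun j _ => hb j) ?_
    have : 0 < Fintype.card F := Fintype.card_pos
    omega
  have hzero : P = 0 := by
    refine Polynomial.eq_zero_of_natDegree_lt_card_of_eval_eq_zero P
      (f := fun x : F => x) (fun x y hxy => hxy) (fun x => ?_) hdeg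
    rw [hP, Polynomial.eval_finset_sum]
    simpa using H x
  have hcoeff := congrArg (fun Q => Polynomial.coeff Q (q ^ E i)) hzero
  simp only [hP, Polynomial.finset_sum_coeff, Polynomial.coeff_zero] at hcoeff
  rw [Finset.sum_eq_single i] at hcoeff
  · simpa [Polynomial.coeff_C_mul, Polynomial.coeff_X_pow] using hcoeff
  · intro j _ hji
    have hne : q ^ E j ≠ q ^ E i := by
      intro hEq
      exact hji (hE (Nat.pow_right_injective hq hEq))
    simp [Polynomial.coeff_C_mul, Polynomial.coeff_X_pow, hne]
    intro hEq
    exact absurd hEq.symm hne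
  · intro hi; exact absurd (Finset.mem_univ i) hi

lemma aux_order {q t : ℕ} (hq : 2 ≤ q) (ht : 4 < t) {F : Type*} [Field F]
    (l : F) (hl0 : l ≠ 0) (h1 : l ^ (q ^ t + 1) = 1) (h2 : l ^ q ^ (t - 2) = l) :
    l ^ (q ^ 2 + 1) = 1 ∧ (t % 4 ≠ 2 → l = 1 ∨ l = -1) := by
  have hq0 : 0 < q := by omega
  have hqt2 : 1 ≤ q ^ (t - 2) := Nat.one_le_pow _ _ hq0
  have hd1 : orderOf l ∣ q ^ t + 1 := orderOf_dvd_of_pow_eq_one h1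
  have hd2 : orderOf l ∣ q ^ (t - 2) - 1 := by
    apply orderOf_dvd_of_pow_eq_one
    have : l ^ (q ^ (t - 2) - 1) * l = 1 * l := by
      rw [← pow_succ, one_mul]
      rw [show q ^ (t-2) - 1 + 1 = q ^ (t-2) by omega]
      exact h2
    exact mul_right_cancel₀ hl0 this
  have hd3 : orderOf l ∣ q ^ 2 + 1 := by
    have hkey : q ^ 2 * (q ^ (t - 2) - 1) + (q ^ 2 + 1) = q ^ t + 1 := by
      have e1 : q ^ 2 * q ^ (t - 2) = q ^ t := by
        rw [← pow_add]; congr 1; omega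
      have e2 : q ^ 2 * (q ^ (t-2) - 1) = q ^ 2 * q ^ (t-2) - q ^ 2 := by
        have := Nat.mul_pred (q ^ 2) (q ^ (t-2))
        simpa [Nat.pred_eq_sub_one] using this
      rw [e2, e1]
      have : q ^ 2 ≤ q ^ t := Nat.pow_le_pow_right hq0 (by omega)
      omega
    have : orderOf l ∣ q ^ 2 * (q ^ (t-2) - 1) := Dvd.dvd.mul_left hd2 _
    have := Nat.dvd_sub hd1 this
    rwa [show q ^ t + 1 - q ^ 2 * (q ^ (t-2) - 1) = q ^ 2 + 1 by omega] at this
  constructor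
  · exact orderOf_dvd_iff_pow_eq_one.mp hd3
  · intro h42
    -- derive orderOf l ∣ 2, working in ℤ
    have hdvd2 : orderOf l ∣ 2 := by
      have hZ3 : (orderOf l : ℤ) ∣ (q : ℤ) ^ 2 + 1 := by exact_mod_cast hd3
      have hZ2 : (orderOf l : ℤ) ∣ (q : ℤ) ^ (t - 2) - 1 := by
        have : ((q ^ (t-2) - 1 : ℕ) : ℤ) = (q:ℤ) ^ (t-2) - 1 := by
          push_cast [hqt2]; ring
        rw [← this]; exact_mod_cast hd2
      have key : (orderOf l : ℤ) ∣ 2 := by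
        rcases Nat.even_or_odd t with hte | hto
        · -- t even, t % 4 = 0, so t-2 = 2u with u odd
          obtain ⟨u, hu⟩ : ∃ u, t - 2 = 2 * u := by
            rcases hte with ⟨v, hv⟩; exact ⟨v - 1, by omega⟩
          have huodd : Odd u := by
            rcases Nat.even_or_odd u with he | ho
            · exfalso; rcases he with ⟨w, hw⟩
              have : t % 4 = 2 := by omega
              exact h42 this
            · exact ho
          -- orderOf l ∣ q^2+1 ∣ (q^2)^u + 1 = q^(t-2)+1
          have hdplus : (orderOf l : ℤ) ∣ (q : ℤ) ^ (t-2) + 1 := by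
            refine hZ3.trans ?_
            have := sub_dvd_pow_sub_pow ((q:ℤ)^2) (-1) u
            rw [huodd.neg_pow, one_pow, sub_neg_eq_add, sub_neg_eq_add, ← pow_mul] at this
            rwa [show 2 * u = t - 2 by omega] at this
          have := dvd_sub hdplus hZ2
          simpa using this
        · -- t odd : orderOf l ∣ (q^2)^(t-2)+1 and ∣ q^(2(t-2)) - 1
          have ht2odd : Odd (t - 2) := by
            rcases hto with ⟨v, hv⟩; exact ⟨v - 1, by omega⟩
          have hdplus : (orderOf l : ℤ) ∣ ((q : ℤ) ^ 2) ^ (t-2) + 1 := by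
            refine hZ3.trans ?_
            have := sub_dvd_pow_sub_pow ((q:ℤ)^2) (-1) (t-2)
            rwa [ht2odd.neg_pow, one_pow, sub_neg_eq_add, sub_neg_eq_add] at this
          have hdminus : (orderOf l : ℤ) ∣ ((q : ℤ) ^ 2) ^ (t-2) - 1 := by
            refine hZ2.trans ?_
            have := sub_dvd_pow_sub_pow ((q:ℤ) ^ (t-2)) 1 2
            rw [one_pow] at this
            rw [← pow_mul, mul_comm (t-2) 2, pow_mul] at this
            exact this
          have := dvd_sub hdplus hdminus
          simpa using this
      exact_mod_cast key
    have hl2 : l ^ 2 = 1 := orderOf_dvd_iff_pow_eq_one.mp (by exact_mod_cast hdvd2)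
    have : (l - 1) * (l + 1) = 0 := by linear_combination hl2
    rcases mul_eq_zero.mp this with h | h
    · left; exact sub_eq_zero.mp h
    · right; exact eq_neg_of_add_eq_zero_left h
  

lemma aux_glequiv_scalar {F : Type*} [Field F] (q t : ℕ) (h k a : F) (ha : a ≠ 0)
    (hid : ∀ x : F, a ^ q * psiMap q t h x = psiMap q t k (a * x)) :
    GLEquiv (Uspace q t h) (Uspace q t k) := by
  refine ⟨!![a, 0; 0, a ^ q], ?_, ?_⟩
  · rw [Matrix.isUnit_iff_isUnit_det, Matrix.det_fin_two_of, isUnit_iff_ne_zero]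
    have := mul_ne_zero ha (pow_ne_zero q ha)
    simpa using this
  · ext w
    constructor
    · rintro ⟨_, ⟨x, rfl⟩, rfl⟩
      refine ⟨a * x, ?_⟩
      funext i
      fin_cases i <;>
        simp [Matrix.mulVec, dotProduct, Fin.sum_univ_two, hid x]
    · rintro ⟨y, rfl⟩
      refine ⟨![a⁻¹ * y, psiMap q t h (a⁻¹ * y)], ⟨a⁻¹ * y, rfl⟩, ?_⟩
      funext i
      have hy : a * (a⁻¹ * y) = y := by field_simp
      fin_cases i <;>
        simp [Matrix.mulVec, dotProduct, Fin.sum_univ_two, hid (a⁻¹ * y), hy]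

lemma aux_back2 {F : Type*} [Field F] (q t : ℕ) (hqodd : Odd q) (hq2 : 2 ≤ q)
    (ht : 4 < t) (ht2 : t % 4 = 2) (k l : F) (hk0 : k ≠ 0) (hl0 : l ≠ 0)
    (hl : l ^ (q ^ 2 + 1) = 1) :
    GLEquiv (Uspace q t (l * k)) (Uspace q t k) := by
  set e := (q - 1) / 2 with he
  have hq2e : q = 2 * e + 1 := by
    obtain ⟨m, hm⟩ := hqodd; omega
  have hpp : ∀ (z : F) (i j : ℕ), (z ^ q ^ i) ^ q ^ j = z ^ q ^ (i + j) := fun z i j => by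
    rw [← pow_mul, ← pow_add]
  have hl2 : l ^ q ^ 2 = l⁻¹ := by
    rw [inv_eq_one_div, eq_div_iff hl0, ← pow_succ]
    exact hl
  have hl4 : l ^ q ^ 4 = l := by
    have h4 : l ^ q ^ 4 = (l ^ q ^ 2) ^ q ^ 2 := by rw [hpp]
    rw [h4, hl2, inv_pow, hl2, inv_inv]
  have hper : ∀ (s j : ℕ), l ^ q ^ (4*j + s) = l ^ q ^ s := by
    intro s j
    induction j with
    | zero => norm_num
    | succ n ih =>
      rw [show 4*(n+1) + s = 4 + (4*n + s) by omega, ← hpp l 4 (4*n+s), hl4, ih]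
  have hft1 : l ^ q ^ (t-1) = l ^ q ^ 1 := by
    rw [show t-1 = 4*((t-2)/4) + 1 by omega, hper]
  have hft2 : l ^ q ^ (t+1) = l ^ q ^ 3 := by
    rw [show t+1 = 4*((t-2)/4) + 3 by omega, hper]
  have hft3 : l ^ q ^ (2*t-1) = l ^ q ^ 3 := by
    rw [show 2*t-1 = 4*((2*t-4)/4) + 3 by omega, hper]
  have Spow : ∀ (m : ℕ), (l^e) ^ q ^ m = (l ^ q ^ m) ^ e := fun m => by
    rw [← pow_mul, mul_comm, pow_mul]
  have S1 : (l ^ q ^ 1) ^ e * l = l ^ q ^ 3 * (l ^ q ^ 3) ^ e := by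
    have lhs : (l ^ q ^ 1) ^ e * l = l ^ (q ^ 1 * e + 1) := by
      rw [← pow_mul, ← pow_succ]
    have rhs : l ^ q ^ 3 * (l ^ q ^ 3) ^ e = l ^ (q ^ 3 + q ^ 3 * e) := by
      rw [← pow_mul, ← pow_add]
    rw [lhs, rhs]
    have idn : q ^ 3 + q ^ 3 * e = (q ^ 1 * e + 1) + (q ^ 2 + 1) * (e * (q + 2)) := by
      rw [hq2e]; ring
    rw [idn, pow_add l (q ^ 1 * e + 1) ((q ^ 2 + 1) * (e * (q + 2))),
      pow_mul l (q ^ 2 + 1) (e * (q + 2)), hl, one_pow, mul_one]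

  have C : ∀ m : ℕ, l ^ q ^ m = l ^ q ^ 3 →
      (l^e) ^ q ^ 1 * ((l*k) / (l*k) ^ q ^ m) = k / k ^ q ^ m * (l^e) ^ q ^ m := by
    intro m hm
    have hkm : k ^ q ^ m ≠ 0 := pow_ne_zero _ hk0
    have hlm : l ^ q ^ m ≠ 0 := pow_ne_zero _ hl0
    have S1' : (l^e) ^ q ^ 1 * l = l ^ q ^ m * (l^e) ^ q ^ m := by
      rw [Spow 1, Spow m, hm]
      exact S1
    rw [mul_pow]
    rw [← mul_div_assoc, div_mul_eq_mul_div,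
      div_eq_div_iff (mul_ne_zero hlm hkm) hkm]
    linear_combination (k * k ^ q ^ m) * S1'
  have hid : ∀ x : F, (l^e) ^ q * psiMap q t (l*k) x = psiMap q t k ((l^e) * x) := by
    intro x
    simp only [psiMap]
    rw [mul_pow (l^e) x q, mul_pow, mul_pow, mul_pow]
    have hq1 : (l^e) ^ q = (l^e) ^ q ^ 1 := by rw [pow_one]
    have hC1 := C (t+1) hft2
    have hC2 := C (2*t-1) hft3
    have hB : (l^e) ^ q ^ (t-1) = (l^e) ^ q ^ 1 := by rw [Spow, Spow, hft1]
    rw [hq1]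
    linear_combination (-(x ^ q ^ (t-1))) * hB - x ^ q ^ (t+1) * hC1 + x ^ q ^ (2*t-1) * hC2
  exact aux_glequiv_scalar q t (l*k) k (l^e) (pow_ne_zero _ hl0) hid

set_option maxHeartbeats 2000000 in
lemma aux_forward (p r q t : ℕ) (hp : p.Prime) (hpodd : Odd p) (hr : 0 < r)
    (hq : q = p ^ r) (ht : 4 < t) (F : Type*) [Field F] [Fintype F]
    (hcard : Fintype.card F = q ^ (2 * t)) (h k : F)
    (hh : h ^ (q ^ t + 1) = -1) (hk : k ^ (q ^ t + 1) = -1)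
    (heq : GLEquiv (Uspace q t h) (Uspace q t k)) :
    (h / k) ^ q ^ (t - 2) = h / k := by
  have hq2 : 2 ≤ q := by
    rw [hq]
    calc 2 ≤ p := hp.two_le
    _ ≤ p ^ r := Nat.le_self_pow (by omega) p
  have h0 : h ≠ 0 := by
    intro h0; rw [h0, zero_pow (by positivity)] at hh
    exact absurd hh.symm (by simp)
  have k0 : k ≠ 0 := by
    intro h0; rw [h0, zero_pow (by positivity)] at hk
    exact absurd hk.symm (by simp)
  have hX : ∀ x : F, x ^ q ^ (2*t) = x := fun x => by
    rw [← hcard]; exact FiniteField.pow_card x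
  -- characteristic
  have hchar := ringChar.charP F
  obtain ⟨n, hnp, hncard⟩ := FiniteField.card F (ringChar F)
  have hrc : ringChar F = p := by
    have h1 : p ∣ ringChar F ^ (n : ℕ) := by
      rw [← hncard, hcard, hq, ← pow_mul]
      exact dvd_pow_self p (by positivity)
    exact ((Nat.prime_dvd_prime_iff_eq hp hnp).mp (hp.dvd_of_dvd_pow h1)).symm
  haveI hcp : CharP F p := by rwa [hrc] at hchar
  haveI : Fact p.Prime := ⟨hp⟩
  have hadd : ∀ (u v : F) (m : ℕ), (u + v) ^ q ^ m = u ^ q ^ m + v ^ q ^ m := by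
    intro u v m; rw [hq, ← pow_mul]; exact add_pow_char_pow u v p (r*m)
  have hsub : ∀ (u v : F) (m : ℕ), (u - v) ^ q ^ m = u ^ q ^ m - v ^ q ^ m := by
    intro u v m; rw [hq, ← pow_mul]; exact sub_pow_char_pow u v (r*m)
  have hpp : ∀ (z : F) (i j : ℕ), (z ^ q ^ i) ^ q ^ j = z ^ q ^ (i + j) := fun z i j => by
    rw [← pow_mul, ← pow_add]
  have hred : ∀ (z : F) (s : ℕ), z ^ q ^ (2*t + s) = z ^ q ^ s := fun z s => by
    rw [pow_add, pow_mul, hX]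
  have hinj : ∀ (m : ℕ), m ≤ 2*t → ∀ u v : F, u ^ q ^ m = v ^ q ^ m → u = v := by
    intro m hm u v huv
    have h2 := congrArg (fun z : F => z ^ q ^ (2*t - m)) huv
    rw [hpp, hpp, show m + (2*t - m) = 2*t by omega, hX, hX] at h2
    exact h2
  have hpsih : ∀ z : F, psiMap q t h z = z ^ q ^ 1 + z ^ q ^ (t-1)
      - h / h ^ q ^ (t+1) * z ^ q ^ (t+1) + h / h ^ q ^ (2*t-1) * z ^ q ^ (2*t-1) := by
    intro z; simp [psiMap, pow_one]
  have hpsik : ∀ z : F, psiMap q t k z = z ^ q ^ 1 + z ^ q ^ (t-1)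
      - k / k ^ q ^ (t+1) * z ^ q ^ (t+1) + k / k ^ q ^ (2*t-1) * z ^ q ^ (2*t-1) := by
    intro z; simp [psiMap, pow_one]
  have hpsipow : ∀ (z : F) (j : ℕ), (psiMap q t h z) ^ q ^ j
      = z ^ q ^ (1+j) + z ^ q ^ ((t-1)+j)
        - h ^ q ^ j / h ^ q ^ ((t+1)+j) * z ^ q ^ ((t+1)+j)
        + h ^ q ^ j / h ^ q ^ ((2*t-1)+j) * z ^ q ^ ((2*t-1)+j) := by
    intro z j
    rw [hpsih z]
    simp only [hadd, hsub, mul_pow, div_pow, hpp]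
  have hw1 : ∀ x : F, (psiMap q t h x) ^ q ^ 1
      = x ^ q ^ 2 + x ^ q ^ t - h ^ q ^ 1 / h ^ q ^ (t+2) * x ^ q ^ (t+2)
        + h ^ q ^ 1 / h * x := by
    intro x
    rw [hpsipow x 1, show 1+1 = 2 by omega, show (t-1)+1 = t by omega,
      show (t+1)+1 = t+2 by omega, show (2*t-1)+1 = 2*t by omega]
    simp only [hred, hX]
  have hw2 : ∀ x : F, (psiMap q t h x) ^ q ^ (t-1)
      = x ^ q ^ t + x ^ q ^ (2*t-2) - h ^ q ^ (t-1) / h * x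
        + h ^ q ^ (t-1) / h ^ q ^ (t-2) * x ^ q ^ (t-2) := by
    intro x
    rw [hpsipow x (t-1), show 1+(t-1) = t by omega, show (t-1)+(t-1) = 2*t-2 by omega,
      show (t+1)+(t-1) = 2*t by omega, show (2*t-1)+(t-1) = 2*t+(t-2) by omega]
    simp only [hred, hX]
  have hw3 : ∀ x : F, (psiMap q t h x) ^ q ^ (t+1)
      = x ^ q ^ (t+2) + x - h ^ q ^ (t+1) / h ^ q ^ 2 * x ^ q ^ 2
        + h ^ q ^ (t+1) / h ^ q ^ t * x ^ q ^ t := by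
    intro x
    rw [hpsipow x (t+1), show 1+(t+1) = t+2 by omega, show (t-1)+(t+1) = 2*t by omega,
      show (t+1)+(t+1) = 2*t+2 by omega, show (2*t-1)+(t+1) = 2*t+t by omega]
    simp only [hred, hX]
  have hw4 : ∀ x : F, (psiMap q t h x) ^ q ^ (2*t-1)
      = x + x ^ q ^ (t-2) - h ^ q ^ (2*t-1) / h ^ q ^ t * x ^ q ^ t
        + h ^ q ^ (2*t-1) / h ^ q ^ (2*t-2) * x ^ q ^ (2*t-2) := by
    intro x
    rw [hpsipow x (2*t-1), show 1+(2*t-1) = 2*t by omega,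
      show (t-1)+(2*t-1) = 2*t+(t-2) by omega, show (t+1)+(2*t-1) = 2*t+t by omega,
      show (2*t-1)+(2*t-1) = 2*t+(2*t-2) by omega]
    simp only [hred, hX]
  -- matrix and functional identity
  obtain ⟨A, hA, himg⟩ := heq
  set a := A 0 0 with hadef
  set b := A 0 1 with hbdef
  set c := A 1 0 with hcdef
  set d := A 1 1 with hddef
  have hdet : a * d - b * c ≠ 0 := by
    have hu := (Matrix.isUnit_iff_isUnit_det A).mp hA
    rw [Matrix.det_fin_two] at hu
    exact isUnit_iff_ne_zero.mp hu
  have fid : ∀ x : F, c * x + d * psiMap q t h x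
      = psiMap q t k (a * x + b * psiMap q t h x) := by
    intro x
    have hin : A.mulVec ![x, psiMap q t h x] ∈ Uspace q t k := by
      rw [← himg]; exact ⟨![x, psiMap q t h x], ⟨x, rfl⟩, rfl⟩
    obtain ⟨y, hy⟩ := hin
    have h0c := congrFun hy 0
    have h1c := congrFun hy 1
    simp only [Matrix.mulVec, dotProduct, Fin.sum_univ_two, Matrix.cons_val_zero,
      Matrix.cons_val_one, Matrix.head_cons] at h0c h1c
    rw [← hadef, ← hbdef] at h0c
    rw [← hcdef, ← hddef] at h1c
    rw [← h0c] at h1c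
    exact h1c
  have hγ := aux_lin_indep (F := F) hq2
      (E := ![0, 1, 2, t-2, t-1, t, t+1, t+2, 2*t-2, 2*t-1])
      (expVec_strictMono ht).injective
      (fun i => by
        have hEi : (![0, 1, 2, t-2, t-1, t, t+1, t+2, 2*t-2, 2*t-1] : Fin 10 → ℕ) i < 2*t := by
          fin_cases i <;>
            simp [v10_0, v10_1, v10_2, v10_3, v10_4, v10_5, v10_6, v10_7, v10_8, v10_9] <;>
            omega
        rw [hcard]
        exact Nat.pow_lt_pow_right (by omega) hEi)
      (γ := ![
        c - (b ^ q ^ 1 * (h ^ q ^ 1 / h) - b ^ q ^ (t-1) * (h ^ q ^ (t-1) / h)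
          - k / k ^ q ^ (t+1) * b ^ q ^ (t+1) + k / k ^ q ^ (2*t-1) * b ^ q ^ (2*t-1)),
        d - a ^ q ^ 1,
        -(b ^ q ^ 1 + k / k ^ q ^ (t+1) * (h ^ q ^ (t+1) / h ^ q ^ 2) * b ^ q ^ (t+1)),
        -(b ^ q ^ (t-1) * (h ^ q ^ (t-1) / h ^ q ^ (t-2)) + k / k ^ q ^ (2*t-1) * b ^ q ^ (2*t-1)),
        d - a ^ q ^ (t-1),
        -(b ^ q ^ 1 + b ^ q ^ (t-1) - k / k ^ q ^ (t+1) * (h ^ q ^ (t+1) / h ^ q ^ t) * b ^ q ^ (t+1)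
          - k / k ^ q ^ (2*t-1) * (h ^ q ^ (2*t-1) / h ^ q ^ t) * b ^ q ^ (2*t-1)),
        -(d * (h / h ^ q ^ (t+1))) + k / k ^ q ^ (t+1) * a ^ q ^ (t+1),
        b ^ q ^ 1 * (h ^ q ^ 1 / h ^ q ^ (t+2)) + k / k ^ q ^ (t+1) * b ^ q ^ (t+1),
        -(b ^ q ^ (t-1) + k / k ^ q ^ (2*t-1) * (h ^ q ^ (2*t-1) / h ^ q ^ (2*t-2)) * b ^ q ^ (2*t-1)),
        d * (h / h ^ q ^ (2*t-1)) - k / k ^ q ^ (2*t-1) * a ^ q ^ (2*t-1)])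
      (by
        intro x
        have fidx := fid x
        have hW : ∀ j : ℕ, (a * x + b * psiMap q t h x) ^ q ^ j
            = a ^ q ^ j * x ^ q ^ j + b ^ q ^ j * (psiMap q t h x) ^ q ^ j := fun j => by
          rw [hadd, mul_pow, mul_pow]
        rw [hpsik (a * x + b * psiMap q t h x), hW 1, hW (t-1), hW (t+1), hW (2*t-1),
          hw1 x, hw2 x, hw3 x, hw4 x, hpsih x] at fidx
        simp only [Fin.sum_univ_succ, Fin.sum_univ_zero, Matrix.cons_val_zero,
          Matrix.cons_val_succ, add_zero]
        linear_combination fidx)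
  have e1 : d - a ^ q ^ 1 = 0 := hγ 1
  have e3 : -(b ^ q ^ (t-1) * (h ^ q ^ (t-1) / h ^ q ^ (t-2))
      + k / k ^ q ^ (2*t-1) * b ^ q ^ (2*t-1)) = 0 := hγ 3
  have e4 : d - a ^ q ^ (t-1) = 0 := hγ 4
  have e6 : -(d * (h / h ^ q ^ (t+1))) + k / k ^ q ^ (t+1) * a ^ q ^ (t+1) = 0 := hγ 6
  have e7 : b ^ q ^ 1 * (h ^ q ^ 1 / h ^ q ^ (t+2)) + k / k ^ q ^ (t+1) * b ^ q ^ (t+1) = 0 := hγ 7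
  have e9 : d * (h / h ^ q ^ (2*t-1)) - k / k ^ q ^ (2*t-1) * a ^ q ^ (2*t-1) = 0 := hγ 9
  have hpne : ∀ m : ℕ, h ^ q ^ m ≠ 0 := fun m => pow_ne_zero _ h0
  have kpne : ∀ m : ℕ, k ^ q ^ m ≠ 0 := fun m => pow_ne_zero _ k0
  have M1 : d * h * k ^ q ^ (t+1) = k * h ^ q ^ (t+1) * a ^ q ^ (t+1) := by
    have e := e6
    field_simp at e
    linear_combination -e
  have M2 : d * h * k ^ q ^ (2*t-1) = k * h ^ q ^ (2*t-1) * a ^ q ^ (2*t-1) := by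
    have e := e9
    field_simp at e
    linear_combination e
  have N1 : b ^ q ^ 1 * h ^ q ^ 1 * k ^ q ^ (t+1) + k * h ^ q ^ (t+2) * b ^ q ^ (t+1) = 0 := by
    have e := e7
    field_simp at e
    linear_combination e
  have N2 : b ^ q ^ (t-1) * h ^ q ^ (t-1) * k ^ q ^ (2*t-1)
      + k * h ^ q ^ (t-2) * b ^ q ^ (2*t-1) = 0 := by
    have e := e3
    rw [neg_eq_zero] at e
    field_simp at e
    linear_combination e
  by_cases ha : a = 0
  · -- second-diagonal branch : b ≠ 0
    have hd0 : d = 0 := by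
      have := sub_eq_zero.mp e1
      rw [this, ha, zero_pow (by positivity)]
    have hb : b ≠ 0 := by
      intro hb0
      exact hdet (by rw [ha, hb0]; ring)
    have N1' : b ^ q ^ (t-1) * h ^ q ^ (t-1) * k ^ q ^ (2*t-1)
        + k ^ q ^ (t-2) * h * b ^ q ^ (2*t-1) = 0 := by
      have hF := congrArg (fun z : F => z ^ q ^ (t-2)) N1
      simp only [hadd, mul_pow, hpp] at hF
      rw [zero_pow (by positivity)] at hF
      rw [show 1+(t-2) = t-1 by omega, show (t+1)+(t-2) = 2*t-1 by omega,
        show (t+2)+(t-2) = 2*t by omega, hX h] at hF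
      linear_combination hF
    have key : h * k ^ q ^ (t-2) = k * h ^ q ^ (t-2) := by
      have hbp : b ^ q ^ (2*t-1) ≠ 0 := pow_ne_zero _ hb
      apply mul_right_cancel₀ hbp
      linear_combination N1' - N2
    rw [div_pow, div_eq_div_iff (kpne _) k0]
    linear_combination -key
  · -- diagonal branch : a ≠ 0
    have hd : d = a ^ q ^ 1 := sub_eq_zero.mp e1
    have haa : a ^ q ^ (t-1) = a ^ q ^ 1 := by
      have h4 := sub_eq_zero.mp e4
      rw [hd] at h4
      exact h4.symm
    have ha2 : a ^ q ^ (t-2) = a := by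
      have hF := congrArg (fun z : F => z ^ q ^ (2*t-1)) haa
      rw [hpp, hpp, show (t-1)+(2*t-1) = 2*t+(t-2) by omega,
        show 1+(2*t-1) = 2*t by omega, hred, hX] at hF
      exact hF
    have ha3 : a ^ q ^ (2*t-1) = a ^ q ^ (t+1) := by
      have e : a ^ q ^ (2*t-1) = (a ^ q ^ (t-2)) ^ q ^ (t+1) := by
        rw [hpp, show (t-2)+(t+1) = 2*t-1 by omega]
      rw [e, ha2]
    have cancel : h ^ q ^ (t+1) * k ^ q ^ (2*t-1) = h ^ q ^ (2*t-1) * k ^ q ^ (t+1) := by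
      have hc2 : k * a ^ q ^ (t+1) ≠ 0 := mul_ne_zero k0 (pow_ne_zero _ ha)
      apply mul_left_cancel₀ hc2
      linear_combination (-(k ^ q ^ (2*t-1))) * M1 + k ^ q ^ (t+1) * M2
        + k * h ^ q ^ (2*t-1) * k ^ q ^ (t+1) * ha3
    have r1 : (h/k) ^ q ^ (t+1) = (h/k) ^ q ^ (2*t-1) := by
      rw [div_pow, div_pow, div_eq_div_iff (kpne _) (kpne _)]
      linear_combination cancel
    have r2 : (h/k) ^ q ^ (2*t-1) = ((h/k) ^ q ^ (t-2)) ^ q ^ (t+1) := by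
      rw [hpp, show (t-2)+(t+1) = 2*t-1 by omega]
    exact hinj (t+1) (by omega) _ _ (r2.symm.trans r1.symm)


lemma aux_psineg {F : Type*} [Field F] (q t : ℕ) (hodd : Odd q) (k : F) :
    psiMap q t (-k) = psiMap q t k := by
  funext x
  simp only [psiMap]
  rw [(hodd.pow).neg_pow k, (hodd.pow).neg_pow k, neg_div_neg_eq, neg_div_neg_eq]

lemma aux_glequiv_refl {F : Type*} [Field F] (U : Set (Fin 2 → F)) : GLEquiv U U := by
  refine ⟨1, isUnit_one, ?_⟩
  simp [Matrix.one_mulVec]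

/-- For `t > 4` and `h^{q^t+1} = k^{q^t+1} = -1`: `U_h` and `U_k` are `GL(2,q^n)`-equivalent
iff `h = ±k` when `t ≢ 2 (mod 4)`, and iff `h = ℓk` with `ℓ^{q²+1} = 1` when
`t ≡ 2 (mod 4)`. -/
theorem stmt10 (p r q t : ℕ) (hp : p.Prime) (hpodd : Odd p) (hr : 0 < r)
    (hq : q = p ^ r) (ht : 4 < t)
    (F : Type*) [Field F] [Fintype F] (hcard : Fintype.card F = q ^ (2 * t))
    (h k : F) (hh : h ^ (q ^ t + 1) = -1) (hk : k ^ (q ^ t + 1) = -1) :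
    (t % 4 ≠ 2 →
      (GLEquiv (Uspace q t h) (Uspace q t k) ↔ (h = k ∨ h = -k))) ∧
    (t % 4 = 2 →
      (GLEquiv (Uspace q t h) (Uspace q t k) ↔
        ∃ ℓ : F, ℓ ^ (q ^ 2 + 1) = 1 ∧ h = ℓ * k)) := by
  have hq2 : 2 ≤ q := by
    rw [hq]
    calc 2 ≤ p := hp.two_le
    _ ≤ p ^ r := Nat.le_self_pow (by omega) p
  have hqodd : Odd q := by rw [hq]; exact hpodd.pow
  have h0 : h ≠ 0 := by
    intro h0; rw [h0, zero_pow (by positivity)] at hh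
    exact absurd hh.symm (by simp)
  have k0 : k ≠ 0 := by
    intro h0; rw [h0, zero_pow (by positivity)] at hk
    exact absurd hk.symm (by simp)
  have hdivN : (h / k) ^ (q ^ t + 1) = 1 := by
    rw [div_pow, hh, hk, neg_div_neg_eq, div_self (one_ne_zero)]
  have hdiv0 : h / k ≠ 0 := div_ne_zero h0 k0
  constructor
  · intro h42
    constructor
    · intro heq
      have hL := aux_forward p r q t hp hpodd hr hq ht F hcard h k hh hk heq
      obtain ⟨-, h2⟩ := aux_order hq2 ht (h / k) hdiv0 hdivN hL
      rcases h2 h42 with h1 | h1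
      · left; exact (div_eq_one_iff_eq k0).mp h1
      · right
        rw [div_eq_iff k0] at h1
        rw [h1]; ring
    · rintro (rfl | rfl)
      · exact aux_glequiv_refl _
      · have hU : Uspace q t (-k) = Uspace q t k := by
          simp only [Uspace, aux_psineg q t hqodd k]
        rw [hU]
        exact aux_glequiv_refl _
  · intro h42
    constructor
    · intro heq
      have hL := aux_forward p r q t hp hpodd hr hq ht F hcard h k hh hk heq
      obtain ⟨h1, -⟩ := aux_order hq2 ht (h / k) hdiv0 hdivN hL
      exact ⟨h / k, h1, (div_mul_cancel₀ h k0).symm⟩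
    · rintro ⟨l, hl, rfl⟩
      have hl0 : l ≠ 0 := by
        intro h0'
        rw [h0', zero_mul, zero_pow (by positivity)] at hh
        exact absurd hh.symm (by simp)
      exact aux_back2 q t hqodd hq2 ht h42 k l k0 hl0 hl
end

section
/- Let t > 4 and let h, k ∈ 𝔽_{q^n} satisfy h^{q^t+1} = k^{q^t+1} = −1. Then U_h and U_k are ΓL(2,q^n)-equivalent if and only if: there is a field automorphism ρ of 𝔽_{q^n} with h = k^ρ or h = −k^ρ, in case t ≢ 2 (mod 4); and there are a field automorphism ρ of 𝔽_{q^n} and ℓ ∈ 𝔽_{q^n} with ℓ^{q^2+1} = 1 such that h = ℓ·k^ρ, in case t ≡ 2 (mod 4). -/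
/-- `U, W ⊆ 𝔽_{q^n}²` are `ΓL(2,q^n)`-equivalent: for some field automorphism `ρ` and some
invertible matrix `A`, `A · ρ(U) = W`. -/
def GammaLEquiv {F : Type*} [Field F] (U W : Set (Fin 2 → F)) : Prop :=
  ∃ ρ : F ≃+* F, ∃ A : Matrix (Fin 2) (Fin 2) F, IsUnit A ∧
    (fun w => A.mulVec (fun i => ρ (w i))) '' U = W

/-!
An element `(A, ρ)` of `ΓL(2, q^n)` carrying `U_h` onto `U_k` amounts, after replacing `h` by
`ρ h`, to an identity of `q`-polynomials `ψ_k(a x + b ψ_h(x)) = c x + d ψ_h(x)` with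
`ad - bc ≠ 0`. Modulo `x^{q^{2t}} = x` the ten exponents `q^i` occurring in it are pairwise
distinct as soon as `t > 4`, so coefficients can be compared; whether `a ≠ 0` or `b ≠ 0`, this
forces `h^{q^2+1} = k^{q^2+1}`, i.e. `h = ℓ k^ρ` with `ℓ^{q^2+1} = 1`. Such an `ℓ` satisfies
`ℓ^{q^4} = ℓ`, and unless `t ≡ 2 (mod 4)` this combines with `ℓ^{q^t+1} = 1` (for `t` even) or
with `ℓ^{q^{2t}} = ℓ` (for `t` odd) to give `ℓ = ±1`. Conversely `U_{-k} = U_k`, and for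
`t ≡ 2 (mod 4)` the matrix `diag(a, a^q)` with `a = ℓ^{(q-1)/2}` maps `U_{ℓk}` onto `U_k`.
-/

namespace FiniteField

open Polynomial

variable {F : Type*} [Field F] [Fintype F] {q n : ℕ}

theorem exists_expChar_pow_eq_of_card_eq_pow (hn : n ≠ 0) (hcard : Fintype.card F = q ^ n) :
    ∃ p j : ℕ, ExpChar F p ∧ q = p ^ j := by
  obtain ⟨p, _, m, hp, hpm⟩ := FiniteField.card' F
  have hdvd : q ∣ p ^ (m : ℕ) := by rw [← hpm, hcard]; exact dvd_pow_self q hn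
  obtain ⟨j, -, hj⟩ := (Nat.dvd_prime_pow hp).mp hdvd
  exact ⟨p, j, ExpChar.prime hp, hj⟩

theorem add_pow_pow_of_card_eq_pow (hn : n ≠ 0) (hcard : Fintype.card F = q ^ n) (i : ℕ)
    (x y : F) : (x + y) ^ q ^ i = x ^ q ^ i + y ^ q ^ i := by
  obtain ⟨p, j, _, rfl⟩ := exists_expChar_pow_eq_of_card_eq_pow hn hcard
  rw [← pow_mul]
  exact add_pow_expChar_pow ..

theorem sub_pow_pow_of_card_eq_pow (hn : n ≠ 0) (hcard : Fintype.card F = q ^ n) (i : ℕ)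
    (x y : F) : (x - y) ^ q ^ i = x ^ q ^ i - y ^ q ^ i := by
  obtain ⟨p, j, _, rfl⟩ := exists_expChar_pow_eq_of_card_eq_pow hn hcard
  rw [← pow_mul]
  exact sub_pow_expChar_pow ..

theorem pow_pow_eq_of_eq_or_eq_add (hcard : Fintype.card F = q ^ n) {m m' : ℕ}
    (hm : m = m' ∨ m = n + m') (x : F) : x ^ q ^ m = x ^ q ^ m' := by
  obtain rfl | rfl := hm
  · rfl
  · rw [pow_add, pow_mul, ← hcard, FiniteField.pow_card]

theorem one_lt_of_card_eq_pow (hcard : Fintype.card F = q ^ n) : 1 < q := by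
  have h := Fintype.one_lt_card (α := F)
  rw [hcard] at h
  by_contra! hq
  exact h.not_ge (pow_le_one₀ (Nat.zero_le q) hq)

theorem eq_zero_of_forall_sum_mul_pow_pow_eq_zero (hcard : Fintype.card F = q ^ n)
    {ι : Type*} [Fintype ι] {e : ι → ℕ} (he : Function.Injective e) (hlt : ∀ i, e i < n)
    {C : ι → F} (H : ∀ x : F, ∑ i, C i * x ^ q ^ e i = 0) (i : ι) : C i = 0 := by
  have hq := one_lt_of_card_eq_pow hcard
  have hdeg : ∀ j, (Polynomial.C (C j) * X ^ q ^ e j).natDegree ≤ q ^ (n - 1) := fun j =>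
    (natDegree_C_mul_le _ _).trans <| by
      rw [natDegree_X_pow]; exact Nat.pow_le_pow_right (by omega) (by have := hlt j; omega)
  set P : F[X] := ∑ j, Polynomial.C (C j) * X ^ q ^ e j
  have hP : P = 0 := by
    refine eq_zero_of_natDegree_lt_card_of_eval_eq_zero P Function.injective_id
      (fun x => by simpa [P, eval_finsetSum] using H x) ?_
    rw [hcard]
    calc P.natDegree ≤ q ^ (n - 1) := natDegree_sum_le_of_forall_le _ _ fun j _ => hdeg j
      _ < q ^ n := Nat.pow_lt_pow_right hq (by have := hlt i; omega)
  have := congrArg (coeff · (q ^ e i)) hP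
  simp only [P, finsetSum_coeff, coeff_C_mul, coeff_X_pow, mul_ite, mul_one, mul_zero,
    coeff_zero] at this
  rwa [Finset.sum_eq_single i (fun j _ hji => if_neg fun hij => hji (he
    (Nat.pow_right_injective hq hij).symm)) (by simp), if_pos rfl] at this

end FiniteField

section Uspace

open Matrix

variable {F : Type*} [Field F] {q t : ℕ}

theorem map_psiMap (ρ : F ≃+* F) (h x : F) : ρ (psiMap q t h x) = psiMap q t (ρ h) (ρ x) := by
  simp [psiMap]

theorem psiMap_neg (hq : Odd q) (h : F) : psiMap q t (-h) = psiMap q t h := by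
  funext x
  simp only [psiMap, hq.pow.neg_pow, neg_div_neg_eq]

theorem image_map_Uspace (ρ : F ≃+* F) (h : F) :
    (fun w : Fin 2 → F => fun i => ρ (w i)) '' Uspace q t h = Uspace q t (ρ h) := by
  ext w
  constructor
  · rintro ⟨-, ⟨x, rfl⟩, rfl⟩
    exact ⟨ρ x, by ext i; fin_cases i <;> simp [map_psiMap]⟩
  · rintro ⟨y, rfl⟩
    refine ⟨_, ⟨ρ.symm y, rfl⟩, ?_⟩
    ext i; fin_cases i <;> simp [map_psiMap]

theorem image_mulVec_Uspace {g k a c : F} (ha : a ≠ 0)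
    (H : ∀ x, psiMap q t k (a * x) = c * psiMap q t g x) :
    (!![a, 0; 0, c] *ᵥ ·) '' Uspace q t g = Uspace q t k := by
  ext w
  constructor
  · rintro ⟨-, ⟨x, rfl⟩, rfl⟩
    exact ⟨a * x, by ext i; fin_cases i <;> simp [H, mul_comm]⟩
  · rintro ⟨y, rfl⟩
    refine ⟨_, ⟨a⁻¹ * y, rfl⟩, ?_⟩
    have hy := H (a⁻¹ * y)
    rw [mul_inv_cancel_left₀ ha] at hy
    ext i; fin_cases i <;> simp [hy, ha, mul_comm]

theorem gammaLEquiv_Uspace_of_psiMap_mul {h k a c : F} (ρ : F ≃+* F) (ha : a ≠ 0) (hc : c ≠ 0)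
    (H : ∀ x, psiMap q t k (a * x) = c * psiMap q t (ρ h) x) :
    GammaLEquiv (Uspace q t h) (Uspace q t k) := by
  refine ⟨ρ, !![a, 0; 0, c], ?_, ?_⟩
  · simp [isUnit_iff_isUnit_det, ha, hc]
  · rw [← image_mulVec_Uspace ha H, ← image_map_Uspace ρ h, Set.image_image]

theorem exists_psiMap_comp_of_gammaLEquiv {h k : F}
    (H : GammaLEquiv (Uspace q t h) (Uspace q t k)) :
    ∃ ρ : F ≃+* F, ∃ a b c d : F, a * d - b * c ≠ 0 ∧
      ∀ x, psiMap q t k (a * x + b * psiMap q t (ρ h) x) = c * x + d * psiMap q t (ρ h) x := by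
  obtain ⟨ρ, A, hA, himg⟩ := H
  refine ⟨ρ, A 0 0, A 0 1, A 1 0, A 1 1, ?_, fun x => ?_⟩
  · rw [← det_fin_two]
    exact ((isUnit_iff_isUnit_det A).mp hA).ne_zero
  · have hmem : A *ᵥ ![x, psiMap q t (ρ h) x] ∈ Uspace q t k := by
      rw [← himg]
      exact ⟨_, ⟨ρ.symm x, rfl⟩,
        congrArg (A *ᵥ ·) (by ext i; fin_cases i <;> simp [map_psiMap])⟩
    obtain ⟨y, hy⟩ := hmem
    have hy0 := congrFun hy 0
    have hy1 := congrFun hy 1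
    simp only [mulVec, dotProduct, Fin.sum_univ_two, cons_val_zero, cons_val_one, cons_val_fin_one]
      at hy0 hy1
    rw [hy0, hy1]

end Uspace

section Forward

open FiniteField

variable {F : Type*} [Field F] {q t : ℕ} {h k : F}

theorem ne_zero_of_pow_succ_eq_neg_one {m : ℕ} (hh : h ^ (m + 1) = -1) : h ≠ 0 := by
  rintro rfl
  simp at hh

theorem pow_pow_succ_mul_pow_eq_neg_one (hq : Odd q) (hh : h ^ (q ^ t + 1) = -1) :
    h ^ q ^ (t + 1) * h ^ q = -1 := by
  calc h ^ q ^ (t + 1) * h ^ q = (h ^ (q ^ t + 1)) ^ q := by ring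
    _ = -1 := by rw [hh, hq.neg_one_pow]

theorem div_pow_pow_succ_eq_neg_mul (hq : Odd q) (hh : h ^ (q ^ t + 1) = -1) :
    h / h ^ q ^ (t + 1) = -(h * h ^ q) := by
  rw [div_eq_iff (pow_ne_zero _ (ne_zero_of_pow_succ_eq_neg_one hh))]
  linear_combination h * pow_pow_succ_mul_pow_eq_neg_one hq hh

theorem div_pow_pow_succ_pow_eq_neg_mul (hq : Odd q) (hh : h ^ (q ^ t + 1) = -1) :
    (h / h ^ q ^ (t + 1)) ^ q = -(h ^ q * h ^ q ^ 2) := by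
  rw [div_pow_pow_succ_eq_neg_mul hq hh, hq.neg_pow, mul_pow, ← pow_mul, ← sq]

variable [Fintype F]

theorem mul_add_mul_psiMap_pow_pow (hcard : Fintype.card F = q ^ (2 * t)) (ht : t ≠ 0)
    (j i₂ i₃ i₄ i₅ : ℕ) (h₂ : j + 1 = i₂ ∨ j + 1 = 2 * t + i₂)
    (h₃ : t - 1 + j = i₃ ∨ t - 1 + j = 2 * t + i₃)
    (h₄ : t + 1 + j = i₄ ∨ t + 1 + j = 2 * t + i₄)
    (h₅ : 2 * t - 1 + j = i₅ ∨ 2 * t - 1 + j = 2 * t + i₅) (a b x : F) :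
    (a * x + b * psiMap q t h x) ^ q ^ j
      = a ^ q ^ j * x ^ q ^ j + b ^ q ^ j * x ^ q ^ i₂ + b ^ q ^ j * x ^ q ^ i₃
        - (h / h ^ q ^ (t + 1)) ^ q ^ j * b ^ q ^ j * x ^ q ^ i₄
        + (h / h ^ q ^ (2 * t - 1)) ^ q ^ j * b ^ q ^ j * x ^ q ^ i₅ := by
  have hn : 2 * t ≠ 0 := by omega
  simp only [psiMap, add_pow_pow_of_card_eq_pow hn hcard, sub_pow_pow_of_card_eq_pow hn hcard,
    mul_pow, ← pow_mul, ← pow_add, ← pow_succ']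
  rw [pow_pow_eq_of_eq_or_eq_add hcard h₂, pow_pow_eq_of_eq_or_eq_add hcard h₃,
    pow_pow_eq_of_eq_or_eq_add hcard h₄, pow_pow_eq_of_eq_or_eq_add hcard h₅]
  ring

theorem coeff_eqs_of_psiMap_comp (hcard : Fintype.card F = q ^ (2 * t)) (ht : 4 < t)
    {a b c d : F}
    (H : ∀ x, psiMap q t k (a * x + b * psiMap q t h x) = c * x + d * psiMap q t h x) :
    a ^ q = d ∧ a ^ q ^ (t - 1) = d ∧
    k / k ^ q ^ (t + 1) * a ^ q ^ (t + 1) = d * (h / h ^ q ^ (t + 1)) ∧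
    k / k ^ q ^ (2 * t - 1) * a ^ q ^ (2 * t - 1) = d * (h / h ^ q ^ (2 * t - 1)) ∧
    (h / h ^ q ^ (2 * t - 1)) ^ q ^ (t - 1) * b ^ q ^ (t - 1)
      + k / k ^ q ^ (2 * t - 1) * b ^ q ^ (2 * t - 1) = 0 ∧
    (h / h ^ q ^ (t + 1)) ^ q * b ^ q + k / k ^ q ^ (t + 1) * b ^ q ^ (t + 1) = 0 := by
  -- `y ^ q` written as `y ^ q ^ 1`, to match the case `j = 1` of `mul_add_mul_psiMap_pow_pow`
  have hψ : ∀ g y : F, psiMap q t g y = y ^ q ^ 1 + y ^ q ^ (t - 1)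
      - g / g ^ q ^ (t + 1) * y ^ q ^ (t + 1) + g / g ^ q ^ (2 * t - 1) * y ^ q ^ (2 * t - 1) := by
    simp [psiMap]
  have hψh := hψ h
  have hψk := hψ k
  have hexp := fun j i₂ i₃ i₄ i₅ => mul_add_mul_psiMap_pow_pow hcard (by omega) j i₂ i₃ i₄ i₅
    (a := a) (b := b) (h := h)
  set P₁ := h / h ^ q ^ (t + 1)
  set P₂ := h / h ^ q ^ (2 * t - 1)
  set K₁ := k / k ^ q ^ (t + 1)
  set K₂ := k / k ^ q ^ (2 * t - 1)
  -- the ten exponents `e` are pairwise distinct only because `t > 4`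
  have hcoeff := eq_zero_of_forall_sum_mul_pow_pow_eq_zero hcard
    (e := ![1, t - 1, t + 1, 2 * t - 1, t - 2, t + 2, 0, 2, t, 2 * t - 2])
    (List.nodup_ofFn.mp (by simp; omega)) (fun i => by fin_cases i <;> simp <;> omega)
    (C := ![a ^ q ^ 1 - d, a ^ q ^ (t - 1) - d, -(K₁ * a ^ q ^ (t + 1)) + d * P₁,
      K₂ * a ^ q ^ (2 * t - 1) - d * P₂,
      P₂ ^ q ^ (t - 1) * b ^ q ^ (t - 1) + K₂ * b ^ q ^ (2 * t - 1),
      -(P₁ ^ q ^ 1 * b ^ q ^ 1) - K₁ * b ^ q ^ (t + 1),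
      P₂ ^ q ^ 1 * b ^ q ^ 1 - P₁ ^ q ^ (t - 1) * b ^ q ^ (t - 1) - K₁ * b ^ q ^ (t + 1)
        + K₂ * b ^ q ^ (2 * t - 1) - c,
      b ^ q ^ 1 + K₁ * P₁ ^ q ^ (t + 1) * b ^ q ^ (t + 1),
      b ^ q ^ 1 + b ^ q ^ (t - 1) - K₁ * P₂ ^ q ^ (t + 1) * b ^ q ^ (t + 1)
        - K₂ * P₁ ^ q ^ (2 * t - 1) * b ^ q ^ (2 * t - 1),
      b ^ q ^ (t - 1) + K₂ * P₂ ^ q ^ (2 * t - 1) * b ^ q ^ (2 * t - 1)])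
    (fun x => by
      have hx := H x
      rw [hψk, hexp 1 2 t (t + 2) 0 (by omega) (by omega) (by omega) (by omega),
        hexp (t - 1) t (2 * t - 2) 0 (t - 2) (by omega) (by omega) (by omega) (by omega),
        hexp (t + 1) (t + 2) 0 2 t (by omega) (by omega) (by omega) (by omega),
        hexp (2 * t - 1) 0 (t - 2) t (2 * t - 2) (by omega) (by omega) (by omega) (by omega),
        hψh] at hx
      simp only [Fin.sum_univ_succ, Fin.sum_univ_zero, Matrix.cons_val_zero, Matrix.cons_val_succ]
      linear_combination hx)
  have E₀ := hcoeff 0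
  have E₁ := hcoeff 1
  have E₂ := hcoeff 2
  have E₃ := hcoeff 3
  have E₄ := hcoeff 4
  have E₅ := hcoeff 5
  simp only [Matrix.cons_val, pow_one] at E₀ E₁ E₂ E₃ E₄ E₅
  exact ⟨by linear_combination E₀, by linear_combination E₁, by linear_combination -E₂,
    by linear_combination E₃, E₄, by linear_combination -E₅⟩

theorem div_pow_pow_two_mul_sub_one_pow (hcard : Fintype.card F = q ^ (2 * t)) (ht : t ≠ 0) :
    (h / h ^ q ^ (2 * t - 1)) ^ q = h ^ q / h := by
  rw [div_pow, ← pow_mul, ← pow_succ, pow_pow_eq_of_eq_or_eq_add hcard (m' := 0) (by omega),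
    pow_zero, pow_one]

theorem div_pow_pow_two_mul_sub_one_pow_pow_succ (hcard : Fintype.card F = q ^ (2 * t))
    (ht : t ≠ 0) (hq : Odd q) (hh : h ^ (q ^ t + 1) = -1) :
    (h / h ^ q ^ (2 * t - 1)) ^ q ^ (t + 1) = h / h ^ q := by
  have h0 := ne_zero_of_pow_succ_eq_neg_one hh
  rw [div_pow, ← pow_mul, ← pow_add,
    pow_pow_eq_of_eq_or_eq_add hcard (m := 2 * t - 1 + (t + 1)) (m' := t) (by omega),
    div_eq_div_iff (pow_ne_zero _ h0) (pow_ne_zero _ h0)]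
  linear_combination pow_pow_succ_mul_pow_eq_neg_one hq hh - (pow_succ h (q ^ t)).symm.trans hh

theorem pow_sq_add_one_eq_of_coeff_x_ne_zero (hcard : Fintype.card F = q ^ (2 * t))
    (ht : t ≠ 0) (hq : Odd q) (hh : h ^ (q ^ t + 1) = -1) (hk : k ^ (q ^ t + 1) = -1)
    {a d : F} (ha : a ≠ 0) (E₁ : a ^ q = d) (E₂ : a ^ q ^ (t - 1) = d)
    (E₃ : k / k ^ q ^ (t + 1) * a ^ q ^ (t + 1) = d * (h / h ^ q ^ (t + 1)))
    (E₄ : k / k ^ q ^ (2 * t - 1) * a ^ q ^ (2 * t - 1) = d * (h / h ^ q ^ (2 * t - 1))) :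
    h ^ (q ^ 2 + 1) = k ^ (q ^ 2 + 1) := by
  have h0 := ne_zero_of_pow_succ_eq_neg_one hh
  have k0 := ne_zero_of_pow_succ_eq_neg_one hk
  have hd : d ≠ 0 := E₁ ▸ pow_ne_zero _ ha
  have ha' : a ^ q ^ (2 * t - 1) = a ^ q ^ (t + 1) := by
    have := congrArg (· ^ q ^ t) (E₂.trans E₁.symm)
    simp only [← pow_mul, ← pow_add, ← pow_succ'] at this
    rwa [show t - 1 + t = 2 * t - 1 by omega] at this
  rw [ha'] at E₄
  have hkey : (k / k ^ q ^ (2 * t - 1) * (h / h ^ q ^ (t + 1))) ^ q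
      = (k / k ^ q ^ (t + 1) * (h / h ^ q ^ (2 * t - 1))) ^ q := by
    congr 1
    exact mul_left_cancel₀ hd (by linear_combination k / k ^ q ^ (t + 1) * E₄
      - k / k ^ q ^ (2 * t - 1) * E₃)
  rw [mul_pow, mul_pow, div_pow_pow_two_mul_sub_one_pow hcard ht,
    div_pow_pow_succ_pow_eq_neg_mul hq hh, div_pow_pow_succ_pow_eq_neg_mul hq hk,
    div_pow_pow_two_mul_sub_one_pow hcard ht] at hkey
  field_simp at hkey
  rw [pow_succ, pow_succ]
  linear_combination -hkey

theorem pow_sq_add_one_eq_of_coeff_psi_ne_zero (hcard : Fintype.card F = q ^ (2 * t))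
    (ht : t ≠ 0) (hq : Odd q) (hh : h ^ (q ^ t + 1) = -1) (hk : k ^ (q ^ t + 1) = -1)
    {b : F} (hb : b ≠ 0)
    (E₅ : (h / h ^ q ^ (2 * t - 1)) ^ q ^ (t - 1) * b ^ q ^ (t - 1)
      + k / k ^ q ^ (2 * t - 1) * b ^ q ^ (2 * t - 1) = 0)
    (E₆ : (h / h ^ q ^ (t + 1)) ^ q * b ^ q + k / k ^ q ^ (t + 1) * b ^ q ^ (t + 1) = 0) :
    h ^ (q ^ 2 + 1) = k ^ (q ^ 2 + 1) := by
  have h0 := ne_zero_of_pow_succ_eq_neg_one hh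
  have k0 := ne_zero_of_pow_succ_eq_neg_one hk
  have E₅' := congrArg (· ^ q ^ 2) E₅
  simp only [add_pow_pow_of_card_eq_pow (by omega : 2 * t ≠ 0) hcard, mul_pow, ← pow_mul,
    ← pow_add] at E₅'
  rw [show t - 1 + 2 = t + 1 by omega,
    pow_pow_eq_of_eq_or_eq_add hcard (m := 2 * t - 1 + 2) (m' := 1) (by omega), pow_one,
    zero_pow (pow_ne_zero 2 hq.pos.ne')] at E₅'
  have hkey : k / k ^ q ^ (t + 1) * (k / k ^ q ^ (2 * t - 1)) ^ q ^ 2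
      = (h / h ^ q ^ (t + 1)) ^ q * (h / h ^ q ^ (2 * t - 1)) ^ q ^ (t + 1) :=
    mul_left_cancel₀ (pow_ne_zero q hb) (by linear_combination k / k ^ q ^ (t + 1) * E₅'
      - (h / h ^ q ^ (2 * t - 1)) ^ q ^ (t + 1) * E₆)
  rw [sq q, pow_mul, div_pow_pow_two_mul_sub_one_pow hcard ht, div_pow, ← pow_mul, ← sq,
    div_pow_pow_succ_eq_neg_mul hq hk, div_pow_pow_succ_pow_eq_neg_mul hq hh,
    div_pow_pow_two_mul_sub_one_pow_pow_succ hcard ht hq hh] at hkey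
  field_simp at hkey
  rw [pow_succ, pow_succ]
  linear_combination hkey

theorem pow_sq_add_one_eq_of_psiMap_comp (hcard : Fintype.card F = q ^ (2 * t)) (ht : 4 < t)
    (hq : Odd q) (hh : h ^ (q ^ t + 1) = -1) (hk : k ^ (q ^ t + 1) = -1) {a b c d : F}
    (hdet : a * d - b * c ≠ 0)
    (H : ∀ x, psiMap q t k (a * x + b * psiMap q t h x) = c * x + d * psiMap q t h x) :
    h ^ (q ^ 2 + 1) = k ^ (q ^ 2 + 1) := by
  obtain ⟨E₁, E₂, E₃, E₄, E₅, E₆⟩ := coeff_eqs_of_psiMap_comp hcard ht H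
  by_cases ha : a = 0
  · refine pow_sq_add_one_eq_of_coeff_psi_ne_zero hcard (by omega) hq hh hk ?_ E₅ E₆
    rintro rfl
    simp [ha] at hdet
  · exact pow_sq_add_one_eq_of_coeff_x_ne_zero hcard (by omega) hq hh hk ha E₁ E₂ E₃ E₄

theorem exists_mul_of_gammaLEquiv (hcard : Fintype.card F = q ^ (2 * t)) (ht : 4 < t)
    (hq : Odd q) (hh : h ^ (q ^ t + 1) = -1) (hk : k ^ (q ^ t + 1) = -1)
    (H : GammaLEquiv (Uspace q t h) (Uspace q t k)) :
    ∃ ρ : F ≃+* F, ∃ ℓ : F, ℓ ^ (q ^ 2 + 1) = 1 ∧ h = ℓ * ρ k := by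
  obtain ⟨ρ, a, b, c, d, hdet, hψ⟩ := exists_psiMap_comp_of_gammaLEquiv H
  have hρh : ρ h ^ (q ^ t + 1) = -1 := by rw [← map_pow, hh, map_neg, map_one]
  have hnorm := pow_sq_add_one_eq_of_psiMap_comp hcard ht hq hρh hk hdet hψ
  have hk0 : ρ.symm k ≠ 0 := by simpa using ne_zero_of_pow_succ_eq_neg_one hk
  refine ⟨ρ.symm, h / ρ.symm k, ?_, (div_mul_cancel₀ h hk0).symm⟩
  rw [div_pow, ← map_pow, ← hnorm, map_pow, RingEquiv.symm_apply_apply,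
    div_self (pow_ne_zero _ (ne_zero_of_pow_succ_eq_neg_one hh))]

end Forward

section Scalars

variable {F : Type*} [Field F] {q t : ℕ} {ℓ : F}

theorem pow_pow_sq_eq_inv (hℓ : ℓ ^ (q ^ 2 + 1) = 1) : ℓ ^ q ^ 2 = ℓ⁻¹ :=
  eq_inv_of_mul_eq_one_left (by rwa [← pow_succ])

theorem pow_pow_four_mul_add (hℓ : ℓ ^ (q ^ 2 + 1) = 1) (s j : ℕ) :
    ℓ ^ q ^ (4 * s + j) = ℓ ^ q ^ j := by
  have h4 : ℓ ^ q ^ 4 = ℓ := by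
    rw [show 4 = 2 + 2 from rfl, pow_add, pow_mul, pow_pow_sq_eq_inv hℓ, inv_pow,
      pow_pow_sq_eq_inv hℓ, inv_inv]
  induction s with
  | zero => simp
  | succ s ih => rw [show 4 * (s + 1) + j = 4 + (4 * s + j) by ring, pow_add, pow_mul, h4, ih]

theorem eq_one_or_eq_neg_one_of_pow_eq_one [Fintype F] (hcard : Fintype.card F = q ^ (2 * t))
    (ht : t % 4 ≠ 2) (hℓ : ℓ ^ (q ^ 2 + 1) = 1) (hℓt : ℓ ^ (q ^ t + 1) = 1) :
    ℓ = 1 ∨ ℓ = -1 := by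
  rw [← mul_self_eq_one_iff]
  rcases Nat.even_or_odd t with ⟨s, rfl⟩ | ⟨s, rfl⟩
  · rwa [pow_succ, show s + s = 4 * (s / 2) + 0 by omega, pow_pow_four_mul_add hℓ, pow_zero,
      pow_one] at hℓt
  · have hfix : ℓ ^ q ^ 2 = ℓ := by
      rw [← pow_pow_four_mul_add hℓ s, show 4 * s + 2 = 2 * (2 * s + 1) by ring,
        ← hcard, FiniteField.pow_card]
    rwa [pow_succ, hfix] at hℓ

theorem exists_pow_eq_of_mod_four_eq_two (hq : Odd q) (ht : t % 4 = 2)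
    (hℓ : ℓ ^ (q ^ 2 + 1) = 1) :
    ∃ a : F, a ≠ 0 ∧ a ^ q ^ (t - 1) = a ^ q ∧
      a ^ q ^ (t + 1) * ℓ ^ q ^ (t + 1) = a ^ q * ℓ ∧
      a ^ q ^ (2 * t - 1) * ℓ ^ q ^ (2 * t - 1) = a ^ q * ℓ := by
  obtain ⟨m, hm⟩ := hq
  have hℓ0 : ℓ ≠ 0 := by rintro rfl; simp at hℓ
  have hmod : ∀ j, ℓ ^ q ^ j = ℓ ^ q ^ (j % 4) := fun j => by
    rw [← pow_pow_four_mul_add hℓ (j / 4) (j % 4), Nat.div_add_mod]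
  have hcomm : ∀ j, (ℓ ^ m) ^ q ^ j = (ℓ ^ q ^ j) ^ m := fun j => pow_right_comm ..
  have h3 : ℓ ^ q ^ 3 = (ℓ ^ q)⁻¹ := by
    rw [pow_succ, pow_mul, pow_pow_sq_eq_inv hℓ, inv_pow]
  have hu : (ℓ ^ q) ^ (2 * m + 1) * ℓ = 1 := by rw [← hm, ← pow_mul, ← sq, ← pow_succ, hℓ]
  have hthree : ∀ j, j % 4 = 3 → (ℓ ^ m) ^ q ^ j * ℓ ^ q ^ j = (ℓ ^ m) ^ q * ℓ := fun j hj => by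
    rw [hcomm, hmod j, hj, h3, pow_right_comm, inv_pow, ← mul_inv, ← pow_succ]
    exact inv_eq_of_mul_eq_one_right (by linear_combination hu)
  refine ⟨ℓ ^ m, pow_ne_zero m hℓ0, ?_, hthree _ (by omega), hthree _ (by omega)⟩
  rw [hcomm, hmod, show (t - 1) % 4 = 1 by omega, pow_one, pow_right_comm]

theorem psiMap_mul_eq_of_pow_eq {k a : F} (hℓ : ℓ ≠ 0) (S₁ : a ^ q ^ (t - 1) = a ^ q)
    (S₂ : a ^ q ^ (t + 1) * ℓ ^ q ^ (t + 1) = a ^ q * ℓ)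
    (S₃ : a ^ q ^ (2 * t - 1) * ℓ ^ q ^ (2 * t - 1) = a ^ q * ℓ) (x : F) :
    psiMap q t k (a * x) = a ^ q * psiMap q t (ℓ * k) x := by
  have S₂' : a ^ q ^ (t + 1) = a ^ q * (ℓ / ℓ ^ q ^ (t + 1)) := by
    rw [mul_div_assoc', eq_div_iff (pow_ne_zero _ hℓ), S₂]
  have S₃' : a ^ q ^ (2 * t - 1) = a ^ q * (ℓ / ℓ ^ q ^ (2 * t - 1)) := by
    rw [mul_div_assoc', eq_div_iff (pow_ne_zero _ hℓ), S₃]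
  simp only [psiMap, mul_pow, S₁, S₂', S₃', ← div_mul_div_comm]
  ring

end Scalars

section Backward

variable {F : Type*} [Field F] {q t : ℕ} {h k : F}

theorem gammaLEquiv_of_eq_or_eq_neg (hq : Odd q) (ρ : F ≃+* F) (hhk : h = ρ k ∨ h = -ρ k) :
    GammaLEquiv (Uspace q t h) (Uspace q t k) := by
  refine gammaLEquiv_Uspace_of_psiMap_mul ρ.symm one_ne_zero one_ne_zero fun x => ?_
  rcases hhk with rfl | rfl <;> simp [psiMap_neg hq]

theorem gammaLEquiv_of_eq_mul_of_mod_four_eq_two (hq : Odd q) (ht : t % 4 = 2) (ρ : F ≃+* F)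
    {ℓ : F} (hℓ : ℓ ^ (q ^ 2 + 1) = 1) (hhk : h = ℓ * ρ k) :
    GammaLEquiv (Uspace q t h) (Uspace q t k) := by
  have hℓ' : ρ.symm ℓ ^ (q ^ 2 + 1) = 1 := by rw [← map_pow, hℓ, map_one]
  obtain ⟨a, ha, S₁, S₂, S₃⟩ := exists_pow_eq_of_mod_four_eq_two hq ht hℓ'
  refine gammaLEquiv_Uspace_of_psiMap_mul ρ.symm ha (pow_ne_zero q ha) fun x => ?_
  rw [hhk, map_mul, RingEquiv.symm_apply_apply]
  exact psiMap_mul_eq_of_pow_eq (by rintro h0; simp [h0] at hℓ') S₁ S₂ S₃ x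

end Backward

theorem stmt11_general (p r q t : ℕ) (hpodd : Odd p)
    (hq : q = p ^ r) (ht : 4 < t)
    (F : Type*) [Field F] [Fintype F] (hcard : Fintype.card F = q ^ (2 * t))
    (h k : F) (hh : h ^ (q ^ t + 1) = -1) (hk : k ^ (q ^ t + 1) = -1) :
    (t % 4 ≠ 2 →
      (GammaLEquiv (Uspace q t h) (Uspace q t k) ↔
        ∃ ρ : F ≃+* F, h = ρ k ∨ h = -ρ k)) ∧
    (t % 4 = 2 →
      (GammaLEquiv (Uspace q t h) (Uspace q t k) ↔
        ∃ ρ : F ≃+* F, ∃ ℓ : F, ℓ ^ (q ^ 2 + 1) = 1 ∧ h = ℓ * ρ k)) := by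
  have hqodd : Odd q := hq ▸ hpodd.pow
  refine ⟨fun ht₄ => ⟨fun H => ?_, fun ⟨ρ, hhk⟩ => gammaLEquiv_of_eq_or_eq_neg hqodd ρ hhk⟩,
    fun ht₄ => ⟨exists_mul_of_gammaLEquiv hcard ht hqodd hh hk, fun ⟨ρ, ℓ, hℓ, hhk⟩ =>
      gammaLEquiv_of_eq_mul_of_mod_four_eq_two hqodd ht₄ ρ hℓ hhk⟩⟩
  obtain ⟨ρ, ℓ, hℓ, rfl⟩ := exists_mul_of_gammaLEquiv hcard ht hqodd hh hk H
  have hρk : ρ k ^ (q ^ t + 1) = -1 := by rw [← map_pow, hk, map_neg, map_one]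
  have hℓt : ℓ ^ (q ^ t + 1) = 1 := by rwa [mul_pow, hρk, mul_neg_one, neg_inj] at hh
  refine ⟨ρ, ?_⟩
  rcases eq_one_or_eq_neg_one_of_pow_eq_one hcard ht₄ hℓ hℓt with rfl | rfl
  · exact Or.inl (one_mul _)
  · exact Or.inr (neg_one_mul _)

/-- For `t > 4` and `h^{q^t+1} = k^{q^t+1} = -1`: `U_h` and `U_k` are `ΓL(2,q^n)`-equivalent
iff `h = ±k^ρ` for some automorphism `ρ` when `t ≢ 2 (mod 4)`, and iff `h = ℓ·k^ρ` with
`ℓ^{q²+1} = 1` when `t ≡ 2 (mod 4)`. -/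
theorem stmt11 (p r q t : ℕ) (hp : p.Prime) (hpodd : Odd p) (hr : 0 < r)
    (hq : q = p ^ r) (ht : 4 < t)
    (F : Type*) [Field F] [Fintype F] (hcard : Fintype.card F = q ^ (2 * t))
    (h k : F) (hh : h ^ (q ^ t + 1) = -1) (hk : k ^ (q ^ t + 1) = -1) :
    (t % 4 ≠ 2 →
      (GammaLEquiv (Uspace q t h) (Uspace q t k) ↔
        ∃ ρ : F ≃+* F, h = ρ k ∨ h = -ρ k)) ∧
    (t % 4 = 2 →
      (GammaLEquiv (Uspace q t h) (Uspace q t k) ↔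
        ∃ ρ : F ≃+* F, ∃ ℓ : F, ℓ ^ (q ^ 2 + 1) = 1 ∧ h = ℓ * ρ k)) :=
  stmt11_general p r q t hpodd hq ht F hcard h k hh hk
end
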